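/- arXiv:2412.14615 — 10 statements merged into one kernel-verified Lean document; each statement's English description precedes it below -/
import Mathlib

section
/- Let q be a prime power, let r > h ≥ 1, and let 𝒮 be a projective h-(n,r,s)_q system with n > s. Then g_q(r, q^{h−1}·(n−s)) ≤ [h]_q·n, i.e., Σ_{i=0}^{r−1} ⌈q^{h−1}(n−s)/q^i⌉ ≤ [h]_q·n (the Griesmer-type upper bound for projective systems). -/
open scoped Classical

noncomputable section

/-- `[i]_q = 1 + q + ⋯ + q^(i-1)`, with `[0]_q = 0`. -/
def gNum (q i : ℕ) : ℕ := ∑ j ∈ Finset.range i, q ^ j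

/-- The Griesmer function `g_q(k,d) = ∑_{i=0}^{k-1} ⌈d / qⁱ⌉`. -/
def griesmer (q k d : ℕ) : ℕ := ∑ i ∈ Finset.range k, (d + q ^ i - 1) / q ^ i

/-- The number of elements of the multiset `S` of subspaces contained in the subspace `U`,
counted with multiplicity. -/
def cnt {F V : Type*} [Field F] [AddCommGroup V] [Module F V]
    (S : Multiset (Submodule F V)) (U : Submodule F V) : ℕ :=
  Multiset.countP (fun W => W ≤ U) S

/-- `S` is a projective `h-(n,r,s)_q` system in `F^r`. -/
def IsSystem {F : Type*} [Field F] [Fintype F] {r : ℕ} (h n s : ℕ)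
    (S : Multiset (Submodule F (Fin r → F))) : Prop :=
  Multiset.card S = n ∧ (∀ W ∈ S, Module.finrank F W ≤ h) ∧
  (∀ H : Submodule F (Fin r → F), Module.finrank F H = r - 1 → cnt S H ≤ s) ∧
  (∃ H : Submodule F (Fin r → F), Module.finrank F H = r - 1 ∧ cnt S H = s)

/-! ### Arithmetic helpers -/

lemma ceil_eq' (d k : ℕ) (hd : 1 ≤ d) (hk : 1 ≤ k) : (d + k - 1) / k = (d - 1) / k + 1 := by
  have : d + k - 1 = (d - 1) + k := by omega
  rw [this, Nat.add_div_right _ hk]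

lemma ceil_comp' (d q i : ℕ) (hd : 1 ≤ d) (hq : 1 ≤ q) :
    ((d + q - 1) / q + q ^ i - 1) / q ^ i = (d + q ^ (i + 1) - 1) / q ^ (i + 1) := by
  have hqi : 1 ≤ q ^ i := Nat.one_le_pow _ _ hq
  have h1 : 1 ≤ (d + q - 1) / q := by
    rw [Nat.le_div_iff_mul_le hq]; omega
  rw [ceil_eq' _ _ h1 hqi, ceil_eq' _ _ hd (Nat.one_le_pow _ _ hq)]
  rw [ceil_eq' _ _ hd hq]
  simp only [Nat.add_sub_cancel]
  rw [Nat.div_div_eq_div_mul, pow_succ']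

lemma griesmer_succ' (q u d : ℕ) (hd : 1 ≤ d) (hq : 1 ≤ q) :
    griesmer q (u + 1) d = d + griesmer q u ((d + q - 1) / q) := by
  unfold griesmer
  rw [Finset.sum_range_succ']
  simp only [pow_zero, Nat.add_sub_cancel, Nat.div_one]
  rw [add_comm]
  congr 1
  exact Finset.sum_congr rfl fun i _ => (ceil_comp' d q i hd hq).symm

lemma griesmer_one' (q d : ℕ) : griesmer q 1 d = d := by
  simp [griesmer]

lemma gNum_mul' (q d : ℕ) (hq : 1 ≤ q) : (q - 1) * gNum q d + 1 = q ^ d := by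
  induction d with
  | zero => simp [gNum]
  | succ d ih =>
    rw [gNum, Finset.sum_range_succ, ← gNum, Nat.mul_add, pow_succ]
    have h1 : 1 ≤ q ^ d := Nat.one_le_pow _ _ hq
    zify [hq] at ih ⊢
    linear_combination ih

lemma gNum_pow_le (q d h : ℕ) (hdh : d ≤ h) : q ^ (h - d) * gNum q d ≤ gNum q h := by
  rw [gNum, Finset.mul_sum]
  have h1 : ∀ j ∈ Finset.range d, q ^ (h - d) * q ^ j = q ^ ((h - d) + j) := by
    intro j _; rw [pow_add]
  rw [Finset.sum_congr rfl h1]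
  have h2 : ∑ j ∈ Finset.range d, q ^ ((h - d) + j)
      = ∑ i ∈ Finset.Ico (h - d) ((h - d) + d), q ^ i := by
    rw [Finset.sum_Ico_eq_sum_range]
    simp
  rw [h2]
  have h3 : (h - d) + d = h := by omega
  rw [h3, gNum]
  exact Finset.sum_le_sum_of_subset (by rw [Finset.range_eq_Ico]; exact Finset.Ico_subset_Ico (by omega) le_rfl)

/-! ### Multiset helpers -/

lemma countP_finsum {α γ : Type*} (P : Multiset α) (T : Finset γ) (rel : α → γ → Prop) :
    ∑ c ∈ T, P.countP (rel · c) = (P.map (fun b => (T.filter (rel b)).card)).sum := by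
  induction P using Multiset.induction with
  | empty => simp
  | cons b P ih =>
    simp only [Multiset.countP_cons, Multiset.map_cons, Multiset.sum_cons,
      Finset.sum_add_distrib, ih]
    rw [add_comm]
    congr 1
    rw [Finset.card_filter]

lemma sum_map_ite {α : Type*} (P : Multiset α) (p : α → Prop) (t : ℕ) (ht : 1 ≤ t) :
    (P.map (fun W => if p W then t else 1)).sum = (t - 1) * P.countP p + Multiset.card P := by
  induction P using Multiset.induction with
  | empty => simp
  | cons b P ih =>
    simp only [Multiset.map_cons, Multiset.sum_cons, Multiset.countP_cons, ih,
      Multiset.card_cons]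
    by_cases h : p b <;> simp [h, Nat.mul_succ] <;> omega

lemma sum_map_ite0 {α : Type*} (P : Multiset α) (p : α → Prop) (c : ℕ) :
    (P.map (fun W => if p W then 0 else c)).sum = c * (Multiset.card P - P.countP p) := by
  induction P using Multiset.induction with
  | empty => simp
  | cons b P ih =>
    have hc := Multiset.countP_le_card p P
    simp only [Multiset.map_cons, Multiset.sum_cons, Multiset.countP_cons, ih,
      Multiset.card_cons]
    by_cases h : p b <;> simp [h]
    rw [show Multiset.card P + 1 - Multiset.countP p P
        = (Multiset.card P - Multiset.countP p P) + 1 from by omega, Nat.mul_succ]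
    omega

lemma countP_bind {α β : Type*} (p : β → Prop) (S : Multiset α) (f : α → Multiset β) :
    Multiset.countP p (S.bind f) = (S.map (fun a => Multiset.countP p (f a))).sum := by
  induction S using Multiset.induction with
  | empty => simp
  | cons b S ih => simp [Multiset.cons_bind, Multiset.countP_add, ih]

/-! ### Linear algebra helpers -/

section LinAlg

open Module Submodule

variable {F V : Type*} [Field F] [AddCommGroup V] [Module F V] [FiniteDimensional F V]

lemma exists_mem_notMem {A B : Submodule F V} (hAB : A ≤ B)
    (h : finrank F A < finrank F B) : ∃ v ∈ B, v ∉ A := by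
  by_contra hc
  push_neg at hc
  exact absurd (Submodule.finrank_mono (le_antisymm hAB hc).ge) (by omega)

lemma rank_sup_point {A : Submodule F V} {v : V} (hv : v ∉ A) :
    finrank F ↥(A ⊔ Submodule.span F {v}) = finrank F A + 1 := by
  have hv0 : v ≠ 0 := fun h => hv (h ▸ A.zero_mem)
  have hinf : A ⊓ Submodule.span F {v} = ⊥ := by
    rw [eq_bot_iff]
    intro w hw
    rw [Submodule.mem_inf] at hw
    obtain ⟨hwA, hws⟩ := hw
    rw [Submodule.mem_span_singleton] at hws
    obtain ⟨c, rfl⟩ := hws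
    rcases eq_or_ne c 0 with rfl | hc
    · simp
    · exfalso
      apply hv
      have := (A.smul_mem_iff (inv_ne_zero hc)).mpr hwA
      rwa [smul_smul, inv_mul_cancel₀ hc, one_smul] at this
  have := Submodule.finrank_sup_add_finrank_inf_eq A (Submodule.span F {v})
  rw [hinf, finrank_span_singleton hv0] at this
  simpa using this

lemma point_span {W : Submodule F V} (hW : finrank F W = 1) :
    ∃ v : V, v ≠ 0 ∧ W = Submodule.span F {v} := by
  have : W ≠ ⊥ := by
    intro h; rw [h] at hW; simp at hW
  obtain ⟨v, hvW, hv0⟩ := Submodule.exists_mem_ne_zero_of_ne_bot this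
  refine ⟨v, hv0, ?_⟩
  have hle : Submodule.span F {v} ≤ W := by simpa [Submodule.span_le]
  exact (Submodule.eq_of_le_of_finrank_le hle (by rw [hW, finrank_span_singleton hv0])).symm

lemma span_eq_of_mem {p : Submodule F V} {v : V} (hp : finrank F p = 1) (hv : v ∈ p)
    (hv0 : v ≠ 0) : Submodule.span F {v} = p := by
  have hle : Submodule.span F {v} ≤ p := by simpa [Submodule.span_le]
  exact Submodule.eq_of_le_of_finrank_le hle (by rw [hp, finrank_span_singleton hv0])

lemma exists_sub_of_le (U : Submodule F V) :
    ∀ k, k ≤ finrank F U → ∃ K, K ≤ U ∧ finrank F K = k := by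
  intro k
  induction k with
  | zero => exact fun _ => ⟨⊥, bot_le, finrank_bot F V⟩
  | succ k ih =>
    intro hk
    obtain ⟨K, hKU, hKrk⟩ := ih (by omega)
    obtain ⟨v, hvU, hvK⟩ := exists_mem_notMem hKU (by omega)
    refine ⟨K ⊔ Submodule.span F {v}, sup_le hKU (by simpa [Submodule.span_le]), ?_⟩
    rw [rank_sup_point hvK, hKrk]

end LinAlg

/-! ### Counting points in finite vector spaces -/

section Points

open Module Submodule

variable {F V : Type*} [Field F] [Fintype F] [AddCommGroup V] [Module F V]
  [FiniteDimensional F V] [Fintype V]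

instance : Fintype (Submodule F V) := Fintype.ofFinite _

/-- the finite set of `1`-dimensional subspaces of `W` -/
def pts (W : Submodule F V) : Finset (Submodule F V) :=
  Finset.univ.filter (fun p => p ≤ W ∧ finrank F p = 1)

lemma card_nonzero (W : Submodule F V) :
    (Finset.univ.filter (fun v : V => v ∈ W ∧ v ≠ 0)).card
      = Fintype.card F ^ finrank F W - 1 := by
  have h1 : (Finset.univ.filter (fun v : V => v ∈ W ∧ v ≠ 0))
      = (Finset.univ.filter (fun v : V => v ∈ W)).erase 0 := by
    ext v
    simp [Finset.mem_erase, and_comm]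
  rw [h1, Finset.card_erase_of_mem (by simp [W.zero_mem])]
  congr 1
  rw [← Fintype.card_subtype]
  rw [← card_eq_pow_finrank (K := F) (V := ↥W)]

lemma card_pts_mul (W : Submodule F V) :
    (pts W).card * (Fintype.card F - 1) = Fintype.card F ^ finrank F W - 1 := by
  classical
  rw [← card_nonzero W]
  rw [Finset.card_eq_sum_card_fiberwise
    (f := fun v : V => Submodule.span F {v}) (t := pts W) ?_]
  · rw [Finset.sum_congr rfl (g := fun _ => Fintype.card F - 1) ?_, Finset.sum_const,
      smul_eq_mul]
    intro p hp
    simp only [pts, Finset.mem_filter, Finset.mem_univ, true_and] at hp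
    obtain ⟨hpW, hprk⟩ := hp
    have hfib : (Finset.univ.filter (fun v : V => v ∈ W ∧ v ≠ 0)).filter
        (fun v => Submodule.span F {v} = p)
        = (Finset.univ.filter (fun v : V => v ∈ p)).erase 0 := by
      ext v
      simp only [Finset.mem_filter, Finset.mem_univ, true_and, Finset.mem_erase]
      constructor
      · rintro ⟨⟨hvW, hv0⟩, hsp⟩
        exact ⟨hv0, hsp ▸ Submodule.mem_span_singleton_self v⟩
      · rintro ⟨hv0, hvp⟩
        exact ⟨⟨hpW hvp, hv0⟩, span_eq_of_mem hprk hvp hv0⟩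
    rw [hfib, Finset.card_erase_of_mem (by simp [p.zero_mem])]
    have : (Finset.univ.filter (fun v : V => v ∈ p)).card = Fintype.card F ^ finrank F p := by
      rw [← Fintype.card_subtype, ← card_eq_pow_finrank (K := F) (V := ↥p)]
    rw [this, hprk, pow_one]
  · intro v hv
    simp only [Finset.mem_coe, Finset.mem_filter, Finset.mem_univ, true_and] at hv
    obtain ⟨hvW, hv0⟩ := hv
    simp only [pts, Finset.mem_coe, Finset.mem_filter, Finset.mem_univ, true_and]
    exact ⟨by simpa [Submodule.span_le], finrank_span_singleton hv0⟩

lemma card_pts (W : Submodule F V) :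
    (pts W).card = gNum (Fintype.card F) (finrank F W) := by
  have hq : 2 ≤ Fintype.card F := Fintype.one_lt_card
  have h1 := card_pts_mul W
  have h2 := gNum_mul' (Fintype.card F) (finrank F W) (by omega)
  apply Nat.eq_of_mul_eq_mul_right (show 0 < Fintype.card F - 1 by omega)
  rw [h1, Nat.mul_comm]
  omega

lemma pts_filter (W K : Submodule F V) :
    (pts W).filter (fun p => p ≤ K) = pts (W ⊓ K) := by
  ext p
  simp only [pts, Finset.mem_filter, Finset.mem_univ, true_and, le_inf_iff]
  tauto

end Points

/-! ### The key induction (geometric form of the Griesmer bound) -/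

section Key

open Module Submodule

variable {F V : Type*} [Field F] [Fintype F] [AddCommGroup V] [Module F V]
  [FiniteDimensional F V] [Fintype V]

lemma key_induction :
    ∀ (u d : ℕ), 1 ≤ d → ∀ U : Submodule F V, finrank F U = u →
    ∀ P : Multiset (Submodule F V),
      (∀ W ∈ P, finrank F W = 1 ∧ W ≤ U) →
      (∀ K : Submodule F V, K ≤ U → finrank F K = u - 1 →
        cnt P K + d ≤ Multiset.card P) →
      griesmer (Fintype.card F) u d ≤ Multiset.card P := by
  intro u
  induction u with
  | zero => intro d _ U _ P _ _; simp [griesmer]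
  | succ u ih =>
    intro d hd U hU P hP hK
    set q := Fintype.card F with hqdef
    have hq2 : 2 ≤ q := Fintype.one_lt_card
    -- a hyperplane of U exists
    obtain ⟨K₀, hK₀U, hK₀rk⟩ := exists_sub_of_le U u (by omega)
    -- maximal hyperplane count
    set Q : ℕ → Prop := fun k => ∃ K : Submodule F V, K ≤ U ∧ finrank F K = u ∧ cnt P K = k
      with hQdef
    have hQ0 : Q (cnt P K₀) := ⟨K₀, hK₀U, hK₀rk, rfl⟩
    set m := Nat.findGreatest Q (Multiset.card P) with hmdef
    have hmQ : Q m :=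
      Nat.findGreatest_spec (Multiset.countP_le_card _ _) hQ0
    obtain ⟨Kst, hKstU, hKstrk, hKstm⟩ := hmQ
    have hmax : ∀ K : Submodule F V, K ≤ U → finrank F K = u → cnt P K ≤ m :=
      fun K h1 h2 => Nat.le_findGreatest (Multiset.countP_le_card _ _) ⟨K, h1, h2, rfl⟩
    have hmd : m + d ≤ Multiset.card P := by
      have := hK Kst hKstU (by simpa using hKstrk)
      omega
    -- the filtered multiset
    set P' := P.filter (fun W => W ≤ Kst) with hP'def
    have hcardP' : Multiset.card P' = m := by
      rw [← hKstm]
      exact (Multiset.countP_eq_card_filter _ _).symm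
    set d' := (d + q - 1) / q with hd'def
    have hd' : 1 ≤ d' := by
      rw [hd'def, Nat.le_div_iff_mul_le (by omega)]
      omega
    rcases Nat.eq_zero_or_pos u with rfl | hu
    · rw [griesmer_one' q d]
      omega
    -- now `u ≥ 1`; establish the hyperplane condition for `P'` in `Kst`
    have hcond : ∀ L : Submodule F V, L ≤ Kst → finrank F L = u - 1 →
        cnt P' L + d' ≤ Multiset.card P' := by
      intro L hLK hLrk
      rw [hcardP']
      have hLU : L ≤ U := le_trans hLK hKstU
      -- choose x, y
      obtain ⟨x, hxU, hxL⟩ := exists_mem_notMem hLU (by omega)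
      set Lx := L ⊔ Submodule.span F {x} with hLxdef
      have hLxrk : finrank F ↥Lx = u := by
        rw [hLxdef, rank_sup_point hxL, hLrk]; omega
      have hLxU : Lx ≤ U := sup_le hLU (by simpa [Submodule.span_le])
      obtain ⟨y, hyU, hyLx⟩ := exists_mem_notMem hLxU (by omega)
      have hyL : y ∉ L := fun hy => hyLx (le_sup_left (a := L) hy)
      have hxyL : ∀ c : F, x + c • y ∉ L := by
        intro c hc
        rcases eq_or_ne c 0 with rfl | hc0
        · simp at hc; exact hxL hc
        · apply hyLx
          have h1 : c • y ∈ Lx := by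
            have hxLx : x ∈ Lx := le_sup_right (a := L) (Submodule.mem_span_singleton_self x)
            have : (x + c • y) - x ∈ Lx := Submodule.sub_mem _ (le_sup_left (a := L) hc) hxLx
            simpa using this
          have := (Lx.smul_mem_iff (inv_ne_zero hc0)).mpr h1
          rwa [smul_smul, inv_mul_cancel₀ hc0, one_smul] at this
      -- the pencil of hyperplanes of U through L
      set φ : Option F → Submodule F V := fun o =>
        Option.rec (Submodule.span F {y}) (fun c => Submodule.span F {x + c • y}) o with hφdef
      have hUeq : Lx ⊔ Submodule.span F {y} = U := by
        apply Submodule.eq_of_le_of_finrank_le (sup_le hLxU (by simpa [Submodule.span_le]))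
        rw [rank_sup_point hyLx, hLxrk, hU]
      set HS : Finset (Submodule F V) :=
        Finset.univ.filter (fun H' => L ≤ H' ∧ H' ≤ U ∧ finrank F H' = u) with hHSdef
      set t := HS.card with htdef
      have hsub : HS ⊆ Finset.image (fun o => L ⊔ φ o) Finset.univ := by
        intro H' hH'
        simp only [hHSdef, Finset.mem_filter, Finset.mem_univ, true_and] at hH'
        obtain ⟨hLH', hH'U, hH'rk⟩ := hH'
        obtain ⟨z, hzH', hzL⟩ := exists_mem_notMem hLH' (by omega)
        have hzU : z ∈ Lx ⊔ Submodule.span F {y} := hUeq ▸ hH'U hzH'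
        rw [Submodule.mem_sup] at hzU
        obtain ⟨w, hw, yy, hyy, hzw⟩ := hzU
        rw [Submodule.mem_span_singleton] at hyy
        obtain ⟨b, rfl⟩ := hyy
        rw [hLxdef, Submodule.mem_sup] at hw
        obtain ⟨l, hl, xx, hxx, hwx⟩ := hw
        rw [Submodule.mem_span_singleton] at hxx
        obtain ⟨a, rfl⟩ := hxx
        -- z = l + a•x + b•y
        have hz : z = l + (a • x + b • y) := by rw [← hzw, ← hwx]; exact add_assoc l (a • x) (b • y)
        have haxby : a • x + b • y ∈ H' := by
          have : z - l ∈ H' := Submodule.sub_mem _ hzH' (hLH' hl)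
          rwa [hz, add_sub_cancel_left] at this
        rcases eq_or_ne a 0 with rfl | ha
        · rcases eq_or_ne b 0 with rfl | hb
          · exfalso; apply hzL; rw [hz]; simpa using hl
          · have hyH' : y ∈ H' := by
              have := (H'.smul_mem_iff (inv_ne_zero hb)).mpr (by simpa using haxby)
              rwa [smul_smul, inv_mul_cancel₀ hb, one_smul] at this
            have heq : L ⊔ φ none = H' := by
              apply Submodule.eq_of_le_of_finrank_le
                (sup_le hLH' (by simpa [hφdef, Submodule.span_le]))
              rw [hφdef]
              show finrank F H' ≤ finrank F ↥(L ⊔ Submodule.span F {y})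
              rw [rank_sup_point hyL, hLrk, hH'rk]; omega
            exact Finset.mem_image.2 ⟨none, Finset.mem_univ _, heq⟩
        · have hvH' : x + (a⁻¹ * b) • y ∈ H' := by
            have h1 : a • (x + (a⁻¹ * b) • y) = a • x + b • y := by
              rw [smul_add, smul_smul, ← mul_assoc, mul_inv_cancel₀ ha, one_mul]
            have h2 : a • (x + (a⁻¹ * b) • y) ∈ H' := h1 ▸ haxby
            have := (H'.smul_mem_iff (inv_ne_zero ha)).mpr h2
            rwa [smul_smul, inv_mul_cancel₀ ha, one_smul] at this
          have heq : L ⊔ φ (some (a⁻¹ * b)) = H' := by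
            apply Submodule.eq_of_le_of_finrank_le
              (sup_le hLH' (by simpa [hφdef, Submodule.span_le]))
            rw [hφdef]
            show finrank F H' ≤ finrank F ↥(L ⊔ Submodule.span F {x + (a⁻¹ * b) • y})
            rw [rank_sup_point (hxyL (a⁻¹ * b)), hLrk, hH'rk]; omega
          exact Finset.mem_image.2 ⟨some (a⁻¹ * b), Finset.mem_univ _, heq⟩
      have ht : t ≤ q + 1 := by
        calc t ≤ (Finset.image (fun o => L ⊔ φ o) Finset.univ).card :=
              Finset.card_le_card hsub
          _ ≤ (Finset.univ : Finset (Option F)).card := Finset.card_image_le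
          _ = q + 1 := by simp [hqdef]
      have hKstHS : Kst ∈ HS := by
        simp only [hHSdef, Finset.mem_filter, Finset.mem_univ, true_and]
        exact ⟨hLK, hKstU, hKstrk⟩
      have ht1 : 1 ≤ t := Finset.card_pos.2 ⟨Kst, hKstHS⟩
      -- the sum identity
      have hsum : ∑ H' ∈ HS, cnt P H'
          = (t - 1) * P.countP (fun W => W ≤ L) + Multiset.card P := by
        have h1 : ∑ H' ∈ HS, cnt P H'
            = (P.map (fun W => (HS.filter (fun H' => W ≤ H')).card)).sum :=
          countP_finsum P HS (fun W H' => W ≤ H')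
        have h2 : (P.map (fun W => (HS.filter (fun H' => W ≤ H')).card)).sum
            = (P.map (fun W => if W ≤ L then t else 1)).sum := by
          congr 1
          apply Multiset.map_congr rfl
          intro W hW
          obtain ⟨hWrk, hWU⟩ := hP W hW
          by_cases hWL : W ≤ L
          · rw [if_pos hWL]
            rw [htdef]
            congr 1
            apply Finset.filter_true_of_mem
            intro H' hH'
            simp only [hHSdef, Finset.mem_filter, Finset.mem_univ, true_and] at hH'
            exact le_trans hWL hH'.1
          · rw [if_neg hWL]
            obtain ⟨v, hv0, rfl⟩ := point_span hWrk
            have hvL : v ∉ L := fun hv =>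
              hWL (by simpa [Submodule.span_le] using hv)
            have hLW : L ⊔ Submodule.span F {v} ∈ HS := by
              simp only [hHSdef, Finset.mem_filter, Finset.mem_univ, true_and]
              refine ⟨le_sup_left, sup_le hLU hWU, ?_⟩
              rw [rank_sup_point hvL, hLrk]; omega
            have : HS.filter (fun H' => Submodule.span F {v} ≤ H')
                = {L ⊔ Submodule.span F {v}} := by
              ext H'
              simp only [Finset.mem_filter, Finset.mem_singleton]
              constructor
              · rintro ⟨hH', hWH'⟩
                simp only [hHSdef, Finset.mem_filter, Finset.mem_univ, true_and] at hH'
                apply (Submodule.eq_of_le_of_finrank_le (sup_le hH'.1 hWH') ?_).symm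
                rw [rank_sup_point hvL, hLrk, hH'.2.2]; omega
              · rintro rfl
                exact ⟨hLW, le_sup_right⟩
            rw [this, Finset.card_singleton]
        rw [h1, h2, sum_map_ite P _ t ht1]
      -- the sum bound
      have hbound : ∑ H' ∈ HS, cnt P H' ≤ t * m := by
        calc ∑ H' ∈ HS, cnt P H' ≤ ∑ _H' ∈ HS, m := by
              apply Finset.sum_le_sum
              intro H' hH'
              simp only [hHSdef, Finset.mem_filter, Finset.mem_univ, true_and] at hH'
              exact hmax H' hH'.2.1 hH'.2.2
          _ = t * m := by rw [Finset.sum_const, smul_eq_mul]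
      -- cL ≤ m
      set cL := P.countP (fun W => W ≤ L) with hcLdef
      have hcLm : cL ≤ m := by
        rw [← hKstm]
        unfold cnt
        rw [hcLdef, Multiset.countP_eq_card_filter, Multiset.countP_eq_card_filter]
        exact Multiset.card_le_card
          (Multiset.monotone_filter_right P (fun W hWL => le_trans hWL hLK))
      -- derive the inequality
      obtain ⟨t', ht'⟩ : ∃ t', t = t' + 1 := ⟨t - 1, by omega⟩
      have hdt : d ≤ t' * (m - cL) := by
        have h1 : t' * cL + Multiset.card P ≤ (t' + 1) * m := by
          have h0 := hbound
          rw [hsum] at h0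
          have ht1' : t - 1 = t' := by omega
          rw [ht1', ht'] at h0
          exact h0
        have h2 : t' * m = t' * cL + t' * (m - cL) := by
          rw [← Nat.mul_add, Nat.add_sub_cancel' hcLm]
        have h3 : (t' + 1) * m = t' * cL + t' * (m - cL) + m := by
          rw [Nat.add_mul, one_mul, h2]
        omega
      have hdq : d ≤ q * (m - cL) := by
        calc d ≤ t' * (m - cL) := hdt
          _ ≤ q * (m - cL) := Nat.mul_le_mul_right _ (by omega)
      have hd'e : d' ≤ m - cL := by
        rw [hd'def, Nat.div_le_iff_le_mul_add_pred (by omega : 0 < q)]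
        omega
      have hPP' : cnt P' L ≤ cL := by
        unfold cnt
        rw [hcLdef]
        exact Multiset.countP_le_of_le _ (Multiset.filter_le _ P)
      omega
    -- apply the induction hypothesis
    have hIH := ih d' hd' Kst hKstrk P' ?_ (by simpa using hcond)
    · rw [griesmer_succ' q u d hd (by omega)]
      rw [hcardP', hd'def] at hIH
      omega
    · intro W hW
      rw [hP'def, Multiset.mem_filter] at hW
      exact ⟨(hP W hW.1).1, hW.2⟩

end Key

/-! ### Main theorem -/

theorem statement4 (F : Type*) [Field F] [Fintype F] (q r h n s : ℕ)
    (hq : q = Fintype.card F) (hh : 1 ≤ h) (hhr : h < r)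
    (S : Multiset (Submodule F (Fin r → F))) (hS : IsSystem h n s S) (hns : s < n) :
    griesmer q r (q ^ (h - 1) * (n - s)) ≤ gNum q h * n := by
  classical
  obtain ⟨hcardS, hrkS, hmaxS, -⟩ := hS
  subst hq
  set q := Fintype.card F with hqdef
  have hq2 : 2 ≤ q := Fintype.one_lt_card
  have hrV : Module.finrank F (Fin r → F) = r := Module.finrank_fin_fun F
  set d := q ^ (h - 1) * (n - s) with hddef
  have hd : 1 ≤ d := by
    have : 1 ≤ q ^ (h - 1) := Nat.one_le_pow _ _ (by omega)
    have : 1 ≤ n - s := by omega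
    exact Nat.mul_le_mul ‹1 ≤ q ^ (h - 1)› this
  -- the point multiset
  set f : Submodule F (Fin r → F) → Multiset (Submodule F (Fin r → F)) :=
    fun W => (q ^ (h - Module.finrank F W)) • (pts W).val with hfdef
  set P := S.bind f with hPdef
  -- membership
  have hPmem : ∀ W' ∈ P, Module.finrank F W' = 1 ∧ W' ≤ (⊤ : Submodule F (Fin r → F)) := by
    intro W' hW'
    rw [hPdef, Multiset.mem_bind] at hW'
    obtain ⟨W, hWS, hW'f⟩ := hW'
    rw [hfdef] at hW'f
    rw [Multiset.mem_nsmul] at hW'f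
    have h2 : W' ∈ pts W := Finset.mem_def.mpr hW'f.2
    simp only [pts, Finset.mem_filter, Finset.mem_univ, true_and] at h2
    exact ⟨h2.2, le_top⟩
  -- counting formulas
  have hcnt : ∀ K : Submodule F (Fin r → F), cnt P K
      = (S.map (fun (W : Submodule F (Fin r → F)) => q ^ (h - Module.finrank F W) * (pts (W ⊓ K)).card)).sum := by
    intro K
    unfold cnt
    rw [hPdef, countP_bind]
    congr 1
    apply Multiset.map_congr rfl
    intro W _
    rw [hfdef, Multiset.countP_nsmul]
    congr 1
    rw [Multiset.countP_eq_card_filter]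
    have : Multiset.filter (fun W' => W' ≤ K) (pts W).val = ((pts W).filter (fun p => p ≤ K)).val := rfl
    rw [this, ← Finset.card_def, pts_filter]
  have hcardP : Multiset.card P
      = (S.map (fun (W : Submodule F (Fin r → F)) => q ^ (h - Module.finrank F W) * (pts W).card)).sum := by
    rw [hPdef, Multiset.card_bind]
    congr 1
    apply Multiset.map_congr rfl
    intro W _
    simp only [Function.comp_apply, hfdef]
    rw [Multiset.card_nsmul]
    rfl
  -- the hyperplane inequality for P
  have hyp : ∀ K : Submodule F (Fin r → F), K ≤ ⊤ → Module.finrank F K = r - 1 →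
      cnt P K + d ≤ Multiset.card P := by
    intro K _ hKrk
    have hterm : ∀ W ∈ S, q ^ (h - Module.finrank F W) * (pts W).card
        = q ^ (h - Module.finrank F W) * (pts (W ⊓ K)).card
          + (if W ≤ K then 0 else q ^ (h - 1)) := by
      intro W hWS
      by_cases hWK : W ≤ K
      · rw [if_pos hWK, inf_eq_left.2 hWK, add_zero]
      · rw [if_neg hWK]
        set dW := Module.finrank F W with hdWdef
        have hdWh : dW ≤ h := hrkS W hWS
        have hdW1 : 1 ≤ dW := by
          by_contra h0
          push_neg at h0
          have hbot : W = ⊥ := Submodule.finrank_eq_zero.1 (by rw [← hdWdef]; omega)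
          exact hWK (hbot ▸ bot_le)
        -- finrank of W ⊓ K
        have hKlt : K < W ⊔ K := by
          rcases lt_or_eq_of_le (le_sup_right : K ≤ W ⊔ K) with hlt | he
          · exact hlt
          · exact absurd (le_trans (le_sup_left : W ≤ W ⊔ K) he.symm.le) hWK
        have hsuprk : Module.finrank F ↥(W ⊔ K) = r := by
          have hlt := Submodule.finrank_lt_finrank_of_lt hKlt
          have hle := Submodule.finrank_le (W ⊔ K)
          rw [hrV] at hle
          omega
        have hinfrk : Module.finrank F ↥(W ⊓ K) = dW - 1 := by
          have := Submodule.finrank_sup_add_finrank_inf_eq W K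
          rw [hsuprk, hKrk, ← hdWdef] at this
          omega
        rw [card_pts, card_pts, hinfrk, ← hdWdef, ← hqdef]
        have e1 : gNum q dW = gNum q (dW - 1) + q ^ (dW - 1) := by
          conv_lhs => rw [show dW = (dW - 1) + 1 from by omega]
          rw [gNum, Finset.sum_range_succ, ← gNum]
        rw [e1, Nat.mul_add, ← pow_add,
          show h - dW + (dW - 1) = h - 1 from by omega]
    have hsum : (S.map (fun (W : Submodule F (Fin r → F)) => q ^ (h - Module.finrank F W) * (pts W).card)).sum
        = (S.map (fun (W : Submodule F (Fin r → F)) => q ^ (h - Module.finrank F W) * (pts (W ⊓ K)).card)).sum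
          + (S.map (fun (W : Submodule F (Fin r → F)) => if W ≤ K then 0 else q ^ (h - 1))).sum := by
      rw [← Multiset.sum_map_add]
      exact congrArg _ (Multiset.map_congr rfl hterm)
    have hite : (S.map (fun (W : Submodule F (Fin r → F)) => if W ≤ K then 0 else q ^ (h - 1))).sum
        = q ^ (h - 1) * (n - cnt S K) := by
      rw [sum_map_ite0, hcardS]
      rfl
    have hcntS : cnt S K ≤ s := hmaxS K hKrk
    have hge : d ≤ q ^ (h - 1) * (n - cnt S K) := by
      rw [hddef]
      exact Nat.mul_le_mul_left _ (by omega)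
    rw [hcardP, hsum, hite, hcnt K]
    omega
  -- apply the key induction
  have hkey := key_induction r d hd (⊤ : Submodule F (Fin r → F))
    (by rw [finrank_top]; exact hrV) P hPmem hyp
  -- bound card P
  have hcard_le : Multiset.card P ≤ gNum q h * n := by
    rw [hcardP]
    have hle : ∀ x ∈ S.map (fun (W : Submodule F (Fin r → F)) => q ^ (h - Module.finrank F W) * (pts W).card),
        x ≤ gNum q h := by
      intro x hx
      rw [Multiset.mem_map] at hx
      obtain ⟨W, hWS, rfl⟩ := hx
      rw [card_pts]
      exact gNum_pow_le q (Module.finrank F W) h (hrkS W hWS)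
    calc (S.map (fun (W : Submodule F (Fin r → F)) => q ^ (h - Module.finrank F W) * (pts W).card)).sum
        ≤ Multiset.card (S.map (fun (W : Submodule F (Fin r → F)) => q ^ (h - Module.finrank F W) * (pts W).card))
            • gNum q h := Multiset.sum_le_card_nsmul _ _ hle
      _ = gNum q h * n := by
          rw [Multiset.card_map, hcardS, smul_eq_mul, Nat.mul_comm]
  exact le_trans hkey hcard_le
end
end

section
/- Equip F_q^r with the standard nondegenerate symmetric bilinear form ⟨x,y⟩ = Σ_{i=1}^r x_i y_i, and for a subspace K of F_q^r let K^⊥ denote its orthogonal complement, so dim K^⊥ = r − dim K. Let q be a prime power, let r > h ≥ 1, let 𝒮 be a faithful projective h-(n,r,s,μ)_q system, and let 𝒮^⊥ be the multiset {K^⊥ : K ∈ 𝒮}. Then 𝒮^⊥ is a faithful projective (r−h)-(n,r,μ,s)_q system: every element of 𝒮^⊥ has dimension exactly r−h, every hyperplane of F_q^r contains at most μ elements of 𝒮^⊥ with equality for some hyperplane, and every point of F_q^r is contained in at most s elements of 𝒮^⊥ with equality for some point. -/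
open scoped Classical

noncomputable section

/-- The number of elements of the multiset `S` of subspaces that contain the subspace `P`,
counted with multiplicity. -/
def mult {F V : Type*} [Field F] [AddCommGroup V] [Module F V]
    (S : Multiset (Submodule F V)) (P : Submodule F V) : ℕ :=
  Multiset.countP (fun W => P ≤ W) S

/-- The orthogonal complement of `K` in `F^r` with respect to the standard nondegenerate
symmetric bilinear form `⟨x,y⟩ = ∑ i, x i * y i`. -/
def perp {F : Type*} [Field F] {r : ℕ} (K : Submodule F (Fin r → F)) :
    Submodule F (Fin r → F) where
  carrier := {y | ∀ x ∈ K, ∑ i, x i * y i = 0}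
  zero_mem' := by
    intro x hx
    simp
  add_mem' := by
    intro a b ha hb x hx
    have h1 := ha x hx
    have h2 := hb x hx
    simp only [Pi.add_apply, mul_add, Finset.sum_add_distrib, h1, h2, add_zero]
  smul_mem' := by
    intro c a ha x hx
    have h1 := ha x hx
    show ∑ i, x i * (c • a) i = 0
    have hi : ∀ i, x i * (c • a) i = c * (x i * a i) := by
      intro i
      simp only [Pi.smul_apply, smul_eq_mul]
      ring
    rw [Finset.sum_congr rfl fun i _ => hi i, ← Finset.mul_sum, h1, mul_zero]


section Aux

variable {F : Type*} [Field F] {r : ℕ}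

/-- The standard bilinear form on `Fin r → F`. -/
noncomputable def stdB (F : Type*) [Field F] (r : ℕ) :
    LinearMap.BilinForm F (Fin r → F) :=
  Matrix.toBilin' 1

lemma stdB_apply (x y : Fin r → F) : stdB F r x y = ∑ i, x i * y i := by
  simp [stdB, Matrix.toBilin'_apply', dotProduct]

lemma stdB_symm : (stdB F r).IsSymm := by
  constructor
  intro x y
  simp only [RingHom.id_apply, stdB_apply]
  exact Finset.sum_congr rfl fun i _ => mul_comm _ _

lemma stdB_nondeg : (stdB F r).Nondegenerate := by
  have hL : LinearMap.SeparatingLeft (stdB F r) := by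
    intro x hx
    funext i
    have := hx (Pi.single i 1)
    rw [stdB_apply] at this
    simpa [Pi.single_apply, mul_ite] using this
  exact ⟨hL, fun y hy => hL y fun x => (stdB_symm.eq y x).trans (hy x)⟩

lemma perp_eq (K : Submodule F (Fin r → F)) : perp K = (stdB F r).orthogonal K := by
  ext y
  simp only [LinearMap.BilinForm.mem_orthogonal_iff, LinearMap.BilinForm.IsOrtho, stdB_apply]
  rfl

lemma finrank_perp (K : Submodule F (Fin r → F)) :
    Module.finrank F (perp K) = r - Module.finrank F K := by
  rw [perp_eq, LinearMap.BilinForm.finrank_orthogonal stdB_nondeg,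
    Module.finrank_fin_fun]

lemma perp_perp (K : Submodule F (Fin r → F)) : perp (perp K) = K := by
  rw [perp_eq, perp_eq]
  exact LinearMap.BilinForm.orthogonal_orthogonal stdB_nondeg stdB_symm.isRefl K

lemma le_perp_iff (K P : Submodule F (Fin r → F)) : K ≤ perp P ↔ P ≤ perp K := by
  constructor
  · intro hKP y hy x hx
    have := hKP hx y hy
    rw [← this]
    exact Finset.sum_congr rfl fun i _ => mul_comm _ _
  · intro hPK x hx y hy
    have := hPK hy x hx
    rw [← this]
    exact Finset.sum_congr rfl fun i _ => mul_comm _ _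

lemma perp_le_iff (K H : Submodule F (Fin r → F)) : perp K ≤ H ↔ perp H ≤ K := by
  conv_lhs => rw [← perp_perp H]
  rw [le_perp_iff, perp_perp]

lemma cnt_map_perp (S : Multiset (Submodule F (Fin r → F))) (H : Submodule F (Fin r → F)) :
    cnt (Multiset.map perp S) H = mult S (perp H) := by
  rw [cnt, mult, Multiset.countP_map, Multiset.countP_eq_card_filter]
  congr 1
  apply Multiset.filter_congr
  intro K _
  exact perp_le_iff K H

lemma mult_map_perp (S : Multiset (Submodule F (Fin r → F))) (P : Submodule F (Fin r → F)) :
    mult (Multiset.map perp S) P = cnt S (perp P) := by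
  rw [cnt, mult, Multiset.countP_map, Multiset.countP_eq_card_filter]
  congr 1
  apply Multiset.filter_congr
  intro K _
  exact (le_perp_iff K P).symm

end Aux

theorem statement7 (F : Type*) [Field F] [Fintype F] (q r h n s μ : ℕ)
    (hq : q = Fintype.card F) (hh : 1 ≤ h) (hhr : h < r)
    (S : Multiset (Submodule F (Fin r → F)))
    -- `S` is a faithful projective `h-(n,r,s,μ)_q` system:
    (hcard : Multiset.card S = n)
    (hfaithful : ∀ W ∈ S, Module.finrank F W = h)
    (hhyp : ∀ H : Submodule F (Fin r → F), Module.finrank F H = r - 1 → cnt S H ≤ s)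
    (hhyp' : ∃ H : Submodule F (Fin r → F), Module.finrank F H = r - 1 ∧ cnt S H = s)
    (hpt : ∀ P : Submodule F (Fin r → F), Module.finrank F P = 1 → mult S P ≤ μ)
    (hpt' : ∃ P : Submodule F (Fin r → F), Module.finrank F P = 1 ∧ mult S P = μ) :
    -- `dim K^⊥ = r − dim K` for every subspace `K`
    (∀ K : Submodule F (Fin r → F),
      Module.finrank F (perp K) = r - Module.finrank F K) ∧
    -- `S^⊥` is a faithful projective `(r−h)-(n,r,μ,s)_q` system:
    (∀ W ∈ Multiset.map perp S, Module.finrank F W = r - h) ∧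
    (∀ H : Submodule F (Fin r → F), Module.finrank F H = r - 1 →
      cnt (Multiset.map perp S) H ≤ μ) ∧
    (∃ H : Submodule F (Fin r → F), Module.finrank F H = r - 1 ∧
      cnt (Multiset.map perp S) H = μ) ∧
    (∀ P : Submodule F (Fin r → F), Module.finrank F P = 1 →
      mult (Multiset.map perp S) P ≤ s) ∧
    (∃ P : Submodule F (Fin r → F), Module.finrank F P = 1 ∧
      mult (Multiset.map perp S) P = s) := by
  refine ⟨finrank_perp, ?_, ?_, ?_, ?_, ?_⟩
  · intro W hW
    obtain ⟨K, hK, rfl⟩ := Multiset.mem_map.1 hW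
    rw [finrank_perp, hfaithful K hK]
  · intro H hH
    rw [cnt_map_perp]
    exact hpt _ (by rw [finrank_perp, hH]; omega)
  · obtain ⟨P, hP1, hPμ⟩ := hpt'
    refine ⟨perp P, by rw [finrank_perp, hP1], ?_⟩
    rw [cnt_map_perp, perp_perp, hPμ]
  · intro P hP
    rw [mult_map_perp]
    exact hhyp _ (by rw [finrank_perp, hP])
  · obtain ⟨H, hH1, hHs⟩ := hhyp'
    refine ⟨perp H, by rw [finrank_perp, hH1]; omega, ?_⟩
    rw [mult_map_perp, perp_perp, hHs]
end
end

section
/- Let q be a prime power and l ≥ 1, and let F_q ⊆ F_{q^l} be finite fields with q and q^l elements. Let 𝒮 be a projective h-(n,r,s,μ)_{q^l} system in F_{q^l}^r. Regard F_{q^l}^r as an F_q-vector space of dimension rl and regard each element of 𝒮 as an F_q-subspace (an F_{q^l}-subspace of F_{q^l}-dimension j has F_q-dimension jl). Then the resulting multiset 𝒮' of F_q-subspaces of dimension at most hl satisfies: every F_q-hyperplane of F_{q^l}^r contains at most s elements of 𝒮' with equality for some F_q-hyperplane, and every F_q-point is contained in at most μ elements of 𝒮' with equality for some F_q-point; i.e.,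 𝒮' is a projective hl-(n, rl, s, μ)_q system, and it is faithful whenever 𝒮 is faithful. -/
open scoped Classical

noncomputable section

/-- Monotonicity of `countP` in the predicate. -/
lemma countP_mono_aux {α : Type*} {p q : α → Prop} [DecidablePred p] [DecidablePred q]
    {s : Multiset α} (h : ∀ a ∈ s, p a → q a) : s.countP p ≤ s.countP q := by
  induction s using Multiset.induction with
  | empty => simp
  | cons a t ih =>
    rw [Multiset.countP_cons, Multiset.countP_cons]
    have h1 := h a (Multiset.mem_cons_self a t)
    have h2 := ih fun b hb => h b (Multiset.mem_cons_of_mem hb)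
    split_ifs with hp hq <;> simp_all <;> omega

lemma countP_congr_aux {α : Type*} {p q : α → Prop} [DecidablePred p] [DecidablePred q]
    {s : Multiset α} (h : ∀ a ∈ s, p a ↔ q a) : s.countP p = s.countP q :=
  le_antisymm (countP_mono_aux fun a ha => (h a ha).1) (countP_mono_aux fun a ha => (h a ha).2)

/-- The largest `L`-subspace contained in a `K`-subspace `H`. -/
def Lcore (K : Type*) {L V : Type*} [Field K] [Field L] [Algebra K L]
    [AddCommGroup V] [Module L V] [Module K V] [IsScalarTower K L V]
    (H : Submodule K V) : Submodule L V where
  carrier := {x | ∀ c : L, c • x ∈ H}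
  add_mem' := fun hx hy c => by
    rw [smul_add]; exact H.add_mem (hx c) (hy c)
  zero_mem' := fun c => by rw [smul_zero]; exact H.zero_mem
  smul_mem' := fun a x hx c => by rw [smul_smul]; exact hx (c * a)

lemma restrictScalars_le_iff_le_Lcore {K L V : Type*} [Field K] [Field L] [Algebra K L]
    [AddCommGroup V] [Module L V] [Module K V] [IsScalarTower K L V]
    (W : Submodule L V) (H : Submodule K V) :
    W.restrictScalars K ≤ H ↔ W ≤ Lcore (L := L) K H := by
  constructor
  · intro hle x hx c
    exact hle ((Submodule.restrictScalars_mem K W _).2 (W.smul_mem c hx))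
  · intro hle x hx
    have := hle ((Submodule.restrictScalars_mem K W x).1 hx) 1
    rwa [one_smul] at this

theorem statement8 (K L : Type*) [Field K] [Field L] [Algebra K L]
    [Fintype K] [Fintype L] (l : ℕ) (hl : 1 ≤ l) (hdeg : Module.finrank K L = l)
    (r h n s μ : ℕ)
    (S : Multiset (Submodule L (Fin r → L)))
    -- `S` is a projective `h-(n,r,s,μ)_{q^l}` system in `F_{q^l}^r`:
    (hcard : Multiset.card S = n)
    (hdim : ∀ W ∈ S, Module.finrank L W ≤ h)
    (hhyp : ∀ H : Submodule L (Fin r → L), Module.finrank L H = r - 1 → cnt S H ≤ s)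
    (hhyp' : ∃ H : Submodule L (Fin r → L), Module.finrank L H = r - 1 ∧ cnt S H = s)
    (hpt : ∀ P : Submodule L (Fin r → L), Module.finrank L P = 1 → mult S P ≤ μ)
    (hpt' : ∃ P : Submodule L (Fin r → L), Module.finrank L P = 1 ∧ mult S P = μ) :
    -- the multiset `S'` of `K`-subspaces obtained by restriction of scalars is a
    -- projective `hl-(n, rl, s, μ)_q` system, faithful whenever `S` is:
    Multiset.card (Multiset.map (Submodule.restrictScalars K) S) = n ∧
    (∀ W ∈ Multiset.map (Submodule.restrictScalars K) S, Module.finrank K W ≤ h * l) ∧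
    (∀ H : Submodule K (Fin r → L), Module.finrank K H = r * l - 1 →
      cnt (Multiset.map (Submodule.restrictScalars K) S) H ≤ s) ∧
    (∃ H : Submodule K (Fin r → L), Module.finrank K H = r * l - 1 ∧
      cnt (Multiset.map (Submodule.restrictScalars K) S) H = s) ∧
    (∀ P : Submodule K (Fin r → L), Module.finrank K P = 1 →
      mult (Multiset.map (Submodule.restrictScalars K) S) P ≤ μ) ∧
    (∃ P : Submodule K (Fin r → L), Module.finrank K P = 1 ∧
      mult (Multiset.map (Submodule.restrictScalars K) S) P = μ) ∧
    ((∀ W ∈ S, Module.finrank L W = h) →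
      ∀ W ∈ Multiset.map (Submodule.restrictScalars K) S, Module.finrank K W = h * l) := by
  classical
  set V := Fin r → L
  -- dimension of the whole space over K
  have hrankV : Module.finrank K V = r * l := by
    rw [← Module.finrank_mul_finrank K L V, hdeg, Module.finrank_pi, Fintype.card_fin, mul_comm]
  -- dimension of restricted subspaces
  have hrankW : ∀ W : Submodule L V,
      Module.finrank K (W.restrictScalars K) = Module.finrank L W * l := by
    intro W
    have e := LinearEquiv.restrictScalars K (Submodule.restrictScalarsEquiv K (p := W))
    rw [e.finrank_eq, ← Module.finrank_mul_finrank K L W, hdeg, mul_comm]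
  -- rewriting cnt/mult on the mapped multiset
  have hcnt : ∀ H : Submodule K V,
      cnt (Multiset.map (Submodule.restrictScalars K) S) H
        = Multiset.countP (fun W => W.restrictScalars K ≤ H) S := by
    intro H
    simp only [cnt, Multiset.countP_map, Multiset.countP_eq_card_filter,
      Multiset.filter_map, Multiset.card_map, Function.comp]
  have hmult : ∀ P : Submodule K V,
      mult (Multiset.map (Submodule.restrictScalars K) S) P
        = Multiset.countP (fun W => P ≤ W.restrictScalars K) S := by
    intro P
    simp only [mult, Multiset.countP_map, Multiset.countP_eq_card_filter,
      Multiset.filter_map, Multiset.card_map, Function.comp]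
  -- the hyperplane upper bound
  have key : ∀ H : Submodule K V, Module.finrank K H = r * l - 1 →
      cnt (Multiset.map (Submodule.restrictScalars K) S) H ≤ s := by
    intro H hH
    rcases Nat.eq_zero_or_pos r with hr | hr
    · -- degenerate case r = 0
      have htop : Module.finrank L (⊤ : Submodule L V) = r - 1 := by
        subst hr
        rw [finrank_top, Module.finrank_pi]
        simp
      calc cnt (Multiset.map (Submodule.restrictScalars K) S) H
          ≤ Multiset.countP (fun W => W ≤ (⊤ : Submodule L V)) S := by
            rw [hcnt]; exact countP_mono_aux fun W _ _ => le_top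
        _ = cnt S ⊤ := rfl
        _ ≤ s := hhyp ⊤ htop
    · -- main case r ≥ 1
      have hne : Lcore (L := L) K H ≠ ⊤ := by
        intro e
        have hHtop : H = ⊤ := by
          refine top_unique fun x _ => ?_
          have hx : x ∈ Lcore (L := L) K H := e ▸ Submodule.mem_top
          simpa using hx 1
        rw [hHtop, finrank_top, hrankV] at hH
        have : 1 ≤ r * l := Nat.one_le_iff_ne_zero.2 (by positivity)
        omega
      obtain ⟨f, hf0, hker⟩ :=
        Submodule.exists_le_ker_of_lt_top (Lcore (L := L) K H) (lt_top_iff_ne_top.2 hne)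
      have hrange : Module.finrank L (LinearMap.range f) = 1 := by
        have h1 : LinearMap.range f ≠ ⊥ := fun e => hf0 (LinearMap.range_eq_bot.mp e)
        have h2 : Module.finrank L (LinearMap.range f) ≤ 1 := by
          simpa using (LinearMap.range f).finrank_le
        have h3 : Module.finrank L (LinearMap.range f) ≠ 0 :=
          fun e => h1 (Submodule.finrank_eq_zero.mp e)
        omega
      have hkerr : Module.finrank L (LinearMap.ker f) = r - 1 := by
        have := LinearMap.finrank_range_add_finrank_ker f
        rw [hrange, Module.finrank_pi, Fintype.card_fin] at this
        omega
      calc cnt (Multiset.map (Submodule.restrictScalars K) S) H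
          ≤ Multiset.countP (fun W => W ≤ LinearMap.ker f) S := by
            rw [hcnt]
            exact countP_mono_aux fun W _ hW =>
              le_trans ((restrictScalars_le_iff_le_Lcore W H).1 hW) hker
        _ = cnt S (LinearMap.ker f) := rfl
        _ ≤ s := hhyp _ hkerr
  -- decompose 1-dimensional K-subspaces
  have hpoint : ∀ P : Submodule K V, Module.finrank K P = 1 →
      ∃ x : V, x ≠ 0 ∧ P = Submodule.span K {x} := by
    intro P hP
    have hPne : P ≠ ⊥ := by
      intro e; rw [e, finrank_bot] at hP; exact one_ne_zero hP.symm
    obtain ⟨x, hxP, hx0⟩ := Submodule.exists_mem_ne_zero_of_ne_bot hPne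
    refine ⟨x, hx0, ?_⟩
    refine (Submodule.eq_of_le_of_finrank_eq ?_ ?_).symm
    · rw [Submodule.span_le, Set.singleton_subset_iff]; exact hxP
    · rw [finrank_span_singleton hx0, hP]
  refine ⟨by simpa using hcard, ?_, key, ?_, ?_, ?_, ?_⟩
  · -- dimensions are at most h*l
    intro W' hW'
    obtain ⟨W, hW, rfl⟩ := Multiset.mem_map.1 hW'
    rw [hrankW W]
    exact Nat.mul_le_mul_right l (hdim W hW)
  · -- existence of a K-hyperplane attaining s
    obtain ⟨H₀, hH₀rank, hH₀cnt⟩ := hhyp'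
    rcases Nat.eq_zero_or_pos r with hr | hr
    · refine ⟨⊤, ?_, ?_⟩
      · rw [finrank_top, hrankV, hr]; omega
      · have hall : cnt (Multiset.map (Submodule.restrictScalars K) S) ⊤
            = Multiset.countP (fun W => W ≤ H₀) S := by
          rw [hcnt]
          refine countP_congr_aux fun W _ => ?_
          constructor
          · intro _ x hx
            have : x = 0 := by
              subst hr
              exact Subsingleton.elim x 0
            rw [this]; exact H₀.zero_mem
          · intro _; exact le_top
        rw [hall]; exact hH₀cnt
    · have hlt : H₀.restrictScalars K < ⊤ := by
        rw [lt_top_iff_ne_top]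
        intro e
        have : H₀ = ⊤ := by
          refine top_unique fun x _ => ?_
          have : x ∈ H₀.restrictScalars K := e ▸ Submodule.mem_top
          exact (Submodule.restrictScalars_mem K H₀ x).1 this
        rw [this, finrank_top, Module.finrank_pi, Fintype.card_fin] at hH₀rank
        omega
      obtain ⟨f, hf0, hker⟩ := Submodule.exists_le_ker_of_lt_top _ hlt
      have hrange : Module.finrank K (LinearMap.range f) = 1 := by
        have h1 : LinearMap.range f ≠ ⊥ := fun e => hf0 (LinearMap.range_eq_bot.mp e)
        have h2 : Module.finrank K (LinearMap.range f) ≤ 1 := by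
          simpa using (LinearMap.range f).finrank_le
        have h3 : Module.finrank K (LinearMap.range f) ≠ 0 :=
          fun e => h1 (Submodule.finrank_eq_zero.mp e)
        omega
      have hkerr : Module.finrank K (LinearMap.ker f) = r * l - 1 := by
        have := LinearMap.finrank_range_add_finrank_ker f
        rw [hrange, hrankV] at this
        omega
      refine ⟨LinearMap.ker f, hkerr, le_antisymm (key _ hkerr) ?_⟩
      rw [hcnt]
      calc s = cnt S H₀ := hH₀cnt.symm
        _ ≤ Multiset.countP (fun W => W.restrictScalars K ≤ LinearMap.ker f) S := by
            refine countP_mono_aux fun W _ hW => ?_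
            refine le_trans ?_ hker
            intro x hx
            exact (Submodule.restrictScalars_mem K H₀ x).2
              (hW ((Submodule.restrictScalars_mem K W x).1 hx))
  · -- point upper bound
    intro P hP
    obtain ⟨x, hx0, rfl⟩ := hpoint P hP
    have hLspan : Module.finrank L (Submodule.span L {x}) = 1 := finrank_span_singleton hx0
    calc mult (Multiset.map (Submodule.restrictScalars K) S) (Submodule.span K {x})
        = Multiset.countP (fun W => Submodule.span L {x} ≤ W) S := by
          rw [hmult]
          refine countP_congr_aux fun W _ => ?_
          rw [Submodule.span_le, Submodule.span_le, Set.singleton_subset_iff,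
            Set.singleton_subset_iff]
          exact Submodule.restrictScalars_mem K W x
      _ = mult S (Submodule.span L {x}) := rfl
      _ ≤ μ := hpt _ hLspan
  · -- existence of a K-point attaining μ
    obtain ⟨P₀, hP₀rank, hP₀⟩ := hpt'
    have hP₀ne : P₀ ≠ ⊥ := by
      intro e; rw [e, finrank_bot] at hP₀rank; exact one_ne_zero hP₀rank.symm
    obtain ⟨x, hxP, hx0⟩ := Submodule.exists_mem_ne_zero_of_ne_bot hP₀ne
    have hP₀eq : P₀ = Submodule.span L {x} := by
      refine (Submodule.eq_of_le_of_finrank_eq ?_ ?_).symm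
      · rw [Submodule.span_le, Set.singleton_subset_iff]; exact hxP
      · rw [finrank_span_singleton hx0, hP₀rank]
    refine ⟨Submodule.span K {x}, finrank_span_singleton hx0, ?_⟩
    calc mult (Multiset.map (Submodule.restrictScalars K) S) (Submodule.span K {x})
        = Multiset.countP (fun W => P₀ ≤ W) S := by
          rw [hmult, hP₀eq]
          refine countP_congr_aux fun W _ => ?_
          rw [Submodule.span_le, Submodule.span_le, Set.singleton_subset_iff,
            Set.singleton_subset_iff]
          exact Submodule.restrictScalars_mem K W x
      _ = mult S P₀ := rfl
      _ = μ := hP₀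
  · -- faithfulness
    intro hfaith W' hW'
    obtain ⟨W, hW, rfl⟩ := Multiset.mem_map.1 hW'
    rw [hrankW W, hfaith W hW]
end
end

section
/- Let q be a prime power, let r > h ≥ 1, let 𝒮 be a projective h-(n,r,s)_q system, and let K be an r'-dimensional subspace of F_q^r (1 ≤ r' ≤ r−1) such that exactly s' elements of 𝒮 (counted with multiplicity) are contained in K. Let π : F_q^r → F_q^r/K be the quotient map. Then the multiset 𝒮' := {π(S) : S ∈ 𝒮, S ⊄ K} consists of n − s' nonzero subspaces of the (r−r')-dimensional space F_q^r/K, each of dimension at most h, and every hyperplane of F_q^r/K contains at most s − s' elements of 𝒮' (counted with multiplicity). -/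
open scoped Classical

set_option synthInstance.maxHeartbeats 1000000

noncomputable section

theorem statement9 (F : Type*) [Field F] [Fintype F] (q r h n s r' s' : ℕ)
    (hq : q = Fintype.card F) (hh : 1 ≤ h) (hhr : h < r)
    (S : Multiset (Submodule F (Fin r → F)))
    -- `S` is a projective `h-(n,r,s)_q` system:
    (hcard : Multiset.card S = n)
    (hdim : ∀ W ∈ S, Module.finrank F W ≤ h)
    (hhyp : ∀ H : Submodule F (Fin r → F), Module.finrank F H = r - 1 → cnt S H ≤ s)
    (hhyp' : ∃ H : Submodule F (Fin r → F), Module.finrank F H = r - 1 ∧ cnt S H = s)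
    (K : Submodule F (Fin r → F)) (hK : Module.finrank F K = r')
    (hr'1 : 1 ≤ r') (hr'r : r' ≤ r - 1)
    (hs' : cnt S K = s') :
    -- the projected system `S' = {π(W) : W ∈ S, W ⊄ K}` in `F^r / K`
    let S' : Multiset (Submodule F ((Fin r → F) ⧸ K)) :=
      Multiset.map (Submodule.map K.mkQ) (Multiset.filter (fun W => ¬ W ≤ K) S)
    Module.finrank F ((Fin r → F) ⧸ K) = r - r' ∧
    Multiset.card S' = n - s' ∧
    (∀ W ∈ S', W ≠ ⊥ ∧ Module.finrank F W ≤ h) ∧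
    (∀ H : Submodule F ((Fin r → F) ⧸ K), Module.finrank F H = (r - r') - 1 →
      cnt S' H ≤ s - s') := by
  intro S'
  have hr2 : 2 ≤ r := by omega
  have hfull : Module.finrank F (Fin r → F) = r := by simp
  have hquot : Module.finrank F ((Fin r → F) ⧸ K) = r - r' := by
    have := K.finrank_quotient_add_finrank
    omega
  refine ⟨hquot, ?_, ?_, ?_⟩
  · -- cardinality
    rw [Multiset.card_map, ← Multiset.countP_eq_card_filter]
    have hpart := Multiset.card_eq_countP_add_countP (fun W : Submodule F (Fin r → F) => W ≤ K) S
    unfold cnt at hs'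
    omega
  · intro W hW
    simp only [S', Multiset.mem_map, Multiset.mem_filter] at hW
    obtain ⟨W0, ⟨hW0S, hW0K⟩, rfl⟩ := hW
    constructor
    · intro hb
      apply hW0K
      intro x hx
      have : K.mkQ x ∈ Submodule.map K.mkQ W0 := Submodule.mem_map_of_mem hx
      rw [hb, Submodule.mem_bot] at this
      rwa [Submodule.mkQ_apply, Submodule.Quotient.mk_eq_zero] at this
    · exact le_trans (Submodule.finrank_map_le _ _) (hdim _ hW0S)
  · intro H hH
    set H' : Submodule F (Fin r → F) := H.comap K.mkQ with hH'def
    have hKH' : K ≤ H' := fun x hx => by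
      simpa [H', Submodule.Quotient.mk_eq_zero K |>.mpr hx] using
        (show K.mkQ x ∈ H from by rw [Submodule.mkQ_apply, (Submodule.Quotient.mk_eq_zero K).mpr hx]; exact H.zero_mem)
    -- finrank H' = r - 1
    have hrank : Module.finrank F H' = r - 1 := by
      have hsur : Submodule.map K.mkQ H' = H := Submodule.map_comap_eq_of_surjective K.mkQ_surjective H
      have hker : LinearMap.ker (K.mkQ.comp H'.subtype) = Submodule.comap H'.subtype K := by
        rw [LinearMap.ker_comp, Submodule.ker_mkQ]
      have hrange : LinearMap.range (K.mkQ.comp H'.subtype) = H := by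
        rw [LinearMap.range_comp, Submodule.range_subtype, hsur]
      have hrn := LinearMap.finrank_range_add_finrank_ker (K.mkQ.comp H'.subtype)
      rw [hrange, hker] at hrn
      have e1 : Module.finrank F (Submodule.comap H'.subtype K) = r' := by
        rw [← hK]; exact (Submodule.comapSubtypeEquivOfLe hKH').finrank_eq
      have e2 : Module.finrank F H' = Module.finrank F H + r' := by
        rw [← hrn, e1]
      rw [e2, hH]; omega
    have hbound := hhyp H' hrank
    -- counting
    have hle : ∀ W : Submodule F (Fin r → F), Submodule.map K.mkQ W ≤ H ↔ W ≤ H' :=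
      fun W => Submodule.map_le_iff_le_comap
    unfold cnt at hbound hs' ⊢
    rw [Multiset.countP_map]
    have key : (Multiset.filter (fun W => Submodule.map K.mkQ W ≤ H)
        (Multiset.filter (fun W => ¬ W ≤ K) S)).card
        = Multiset.countP (fun W => W ≤ H' ∧ ¬ W ≤ K) S := by
      rw [Multiset.filter_filter, ← Multiset.countP_eq_card_filter]
      exact Multiset.countP_congr rfl (fun W _ => by simp [hle W, and_comm])
    rw [key]
    have split : Multiset.countP (fun W => W ≤ H' ∧ ¬ W ≤ K) S
        + Multiset.countP (fun W => W ≤ K) S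
        = Multiset.countP (fun W : Submodule F (Fin r → F) => W ≤ H') S := by
      have e := Multiset.countP_eq_countP_filter_add S
        (fun W : Submodule F (Fin r → F) => W ≤ H')
        (fun W : Submodule F (Fin r → F) => W ≤ K)
      rw [Multiset.countP_filter, Multiset.countP_filter] at e
      rw [e, add_comm]
      congr 1
      exact Multiset.countP_congr rfl (fun W _ => propext
        ⟨fun hw => ⟨hw.trans hKH', hw⟩, fun hw => hw.2⟩)
    omega
end
end

section
/- Let q be a prime power and let r > a > h ≥ 1 be integers with r ≡ a (mod h). Then there exists a vector space partition of F_q^r of type h^{t} a^{1} with t = q^a·(q^{r−a} − 1)/(q^h − 1): that is, a multiset consisting of t subspaces of dimension h and one subspace of dimension a such that every point of F_q^r is contained in exactly one member. -/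
open scoped Classical

noncomputable section

universe u

open Polynomial in
/-- There is a finite extension of `F` of any prescribed degree `m ≥ 1`. -/
lemma exists_finite_ext (F : Type u) [Field F] [Fintype F] (m : ℕ) (hm : m ≠ 0) :
    ∃ (K : Type u) (_ : Field K) (_ : Algebra F K) (_ : Fintype K),
      FiniteDimensional F K ∧ Module.finrank F K = m := by
  classical
  set p := ringChar F with hpdef
  haveI hfact : Fact p.Prime := ⟨CharP.char_is_prime F p⟩
  obtain ⟨n, hp, hcard⟩ := FiniteField.card F p
  set N := (n : ℕ) * m with hN
  have hN0 : N ≠ 0 := Nat.mul_ne_zero (PNat.ne_zero n) hm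
  set g : F[X] := X ^ p ^ N - X with hg
  letI K := g.SplittingField
  haveI : FiniteDimensional F K := by infer_instance
  haveI : Finite K := Module.finite_of_finite F
  haveI : Fintype K := Fintype.ofFinite K
  haveI : CharP K p := charP_of_injective_algebraMap (algebraMap F K).injective p
  have aux : g ≠ 0 := FiniteField.X_pow_card_pow_sub_X_ne_zero _ hN0 hp.one_lt
  have key : Fintype.card (g.rootSet K) = g.natDegree :=
    card_rootSet_eq_natDegree (galois_poly_separable p _ (dvd_pow_self p hN0))
      (SplittingField.splits g)
  have ndeg : g.natDegree = p ^ N :=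
    FiniteField.X_pow_card_pow_sub_X_natDegree_eq _ hN0 hp.one_lt
  -- every element of `K` is a root of `g`
  have hfix : ∀ x : K, x ^ p ^ N = x := by
    let E : Subalgebra F K :=
      { carrier := {x | x ^ p ^ N = x}
        mul_mem' := by
          intro x y hx hy
          simp only [Set.mem_setOf_eq] at *
          rw [mul_pow, hx, hy]
        one_mem' := one_pow _
        add_mem' := by
          intro x y hx hy
          simp only [Set.mem_setOf_eq] at *
          rw [add_pow_char_pow, hx, hy]
        zero_mem' := zero_pow (pow_ne_zero _ hfact.out.ne_zero)
        algebraMap_mem' := by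
          intro r
          show (algebraMap F K r) ^ p ^ N = algebraMap F K r
          rw [← map_pow]
          congr 1
          have : r ^ Fintype.card F ^ m = r := FiniteField.pow_card_pow m r
          rwa [hcard, ← pow_mul] at this }
    have htop : (⊤ : Subalgebra F K) ≤ E := by
      rw [← SplittingField.adjoin_rootSet g]
      refine Algebra.adjoin_le ?_
      intro x hx
      rw [mem_rootSet_of_ne aux] at hx
      have : x ^ p ^ N - x = 0 := by
        simpa [g, map_sub, aeval_X_pow, aeval_X] using hx
      exact sub_eq_zero.mp this
    intro x
    exact htop (Algebra.mem_top) (x := x)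
  have huniv : g.rootSet K = Set.univ := by
    rw [Set.eq_univ_iff_forall]
    intro x
    rw [mem_rootSet_of_ne aux]
    simp [g, map_sub, aeval_X_pow, aeval_X, sub_eq_zero, hfix x]
  have hcardK : Fintype.card K = p ^ N := by
    rw [← ndeg, ← key]
    exact (Fintype.card_congr ((Equiv.setCongr huniv).trans (Equiv.Set.univ K))).symm
  have hrk : Fintype.card K = Fintype.card F ^ Module.finrank F K := Module.card_eq_pow_finrank
  rw [hcard, ← pow_mul, hcardK] at hrk
  have := Nat.pow_right_injective hp.two_le hrk.symm
  have hfin : Module.finrank F K = m :=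
    Nat.eq_of_mul_eq_mul_left n.pos (by rw [← hN]; omega)
  exact ⟨K, inferInstance, inferInstance, inferInstance, inferInstance, hfin⟩

lemma geom_sum_nat (x k : ℕ) (hx : 1 ≤ x) :
    (∑ i ∈ Finset.range k, x ^ i) * (x - 1) + 1 = x ^ k := by
  obtain ⟨y, rfl⟩ := Nat.exists_eq_add_of_le hx
  induction k with
  | zero => simp
  | succ k ih =>
    rw [Finset.sum_range_succ, pow_succ]
    have hy : 1 + y - 1 = y := by omega
    rw [hy] at ih ⊢
    nlinarith [ih]

lemma geom_div_nat (x k : ℕ) (hx : 2 ≤ x) :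
    (x ^ k - 1) / (x - 1) = ∑ i ∈ Finset.range k, x ^ i := by
  have h := geom_sum_nat x k (by omega)
  have h1 : x ^ k - 1 = (∑ i ∈ Finset.range k, x ^ i) * (x - 1) := by omega
  rw [h1, Nat.mul_div_cancel _ (by omega)]

lemma main_aux (F : Type u) [Field F] [Fintype F] (a h : ℕ) (hh : 1 ≤ h) (hha : h < a) :
    ∀ k : ℕ, ∀ (V : Type u) [AddCommGroup V] [Module F V] [FiniteDimensional F V],
      Module.finrank F V = a + k * h →
      ∃ (A : Submodule F V) (S : Multiset (Submodule F V)),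
        Module.finrank F A = a ∧
        Multiset.card S = ∑ i ∈ Finset.range k, (Fintype.card F) ^ (a + i * h) ∧
        (∀ W ∈ S, Module.finrank F W = h) ∧
        (∀ v : V, v ≠ 0 → Multiset.countP (fun W => v ∈ W) (A ::ₘ S) = 1) := by
  intro k
  induction k with
  | zero =>
    intro V _ _ _ hV
    refine ⟨⊤, 0, ?_, by simp, by simp, ?_⟩
    · rw [finrank_top, hV]; omega
    · intro v hv
      simp [Multiset.countP_eq_card_filter, Multiset.filter_singleton, Submodule.mem_top]
  | succ k ih =>
    intro V _ _ _ hV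
    obtain ⟨K, iK1, iK2, iK3, hKfd, hKrk⟩ := exists_finite_ext F (a + k * h) (by omega)
    letI := iK1; letI := iK2; letI := iK3; haveI := hKfd
    obtain ⟨AK, SK, hAK, hSKcard, hSKrk, hcov⟩ := ih K hKrk
    have hMrank : Module.finrank F ((Fin h → F) × K) = a + (k + 1) * h := by
      rw [Module.finrank_prod, Module.finrank_fin_fun, hKrk]; ring
    have hhm : h ≤ Module.finrank F K := by rw [hKrk]; nlinarith
    set bK := Module.finBasis F K with hbK
    set σ : (Fin h → F) →ₗ[F] K :=
      bK.repr.symm.toLinearMap ∘ₗ (Finsupp.lmapDomain F F (Fin.castLE hhm)) ∘ₗ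
        (Pi.basisFun F (Fin h)).repr.toLinearMap with hσdef
    have hσ : Function.Injective σ := by
      have h1 : Function.Injective (Finsupp.lmapDomain F F (Fin.castLE hhm)) :=
        fun x y hxy => Finsupp.mapDomain_injective (Fin.castLE_injective hhm) (by simpa using hxy)
      simp only [hσdef, LinearMap.coe_comp, LinearEquiv.coe_coe]
      exact bK.repr.symm.injective.comp (h1.comp (Pi.basisFun F (Fin h)).repr.injective)
    set gm : K → ((Fin h → F) →ₗ[F] K) := fun α => (LinearMap.mulLeft F α) ∘ₗ σ with hgm
    set inr : K →ₗ[F] ((Fin h → F) × K) := LinearMap.inr F (Fin h → F) K with hinrdef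
    have hinr : Function.Injective inr := LinearMap.inr_injective
    set A' : Submodule F ((Fin h → F) × K) := AK.map inr with hA'def
    set G : Multiset (Submodule F ((Fin h → F) × K)) :=
      (Finset.univ.val : Multiset K).map (fun α => (gm α).graph) with hGdef
    set S' : Multiset (Submodule F ((Fin h → F) × K)) :=
      SK.map (Submodule.map inr) + G with hS'def
    have hA' : Module.finrank F A' = a := by
      rw [← hAK]
      exact (Submodule.equivMapOfInjective inr hinr AK).symm.finrank_eq
    have hgraph_rk : ∀ α : K, Module.finrank F ((gm α).graph) = h := by
      intro α
      have hinj : Function.Injective (LinearMap.id.prod (gm α)) := by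
        intro x y hxy
        simpa using congrArg Prod.fst hxy
      rw [LinearMap.graph_eq_range_prod, LinearMap.finrank_range_of_inj hinj,
        Module.finrank_fin_fun]
    have hcov' : ∀ v : (Fin h → F) × K, v ≠ 0 →
        Multiset.countP (fun W => v ∈ W) (A' ::ₘ S') = 1 := by
      rintro ⟨c, x⟩ hv
      have hsplit : (A' ::ₘ S') = (AK ::ₘ SK).map (Submodule.map inr) + G := by
        rw [hS'def, ← Multiset.cons_add, Multiset.map_cons, hA'def]
      rw [hsplit, Multiset.countP_add, Multiset.countP_map, hGdef, Multiset.countP_map,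
        ← Multiset.countP_eq_card_filter, ← Multiset.countP_eq_card_filter]
      by_cases hc : c = 0
      · subst hc
        have hx : x ≠ 0 := by
          intro h0; exact hv (by rw [h0]; rfl)
        have e1 : Multiset.countP (fun W => ((0 : Fin h → F), x) ∈ Submodule.map inr W)
            (AK ::ₘ SK) = 1 := by
          have hcg : Multiset.countP (fun W => ((0 : Fin h → F), x) ∈ Submodule.map inr W)
              (AK ::ₘ SK) = Multiset.countP (fun W => x ∈ W) (AK ::ₘ SK) := by
            refine Multiset.countP_congr rfl (fun W _ => propext ⟨?_, fun hx' => ⟨x, hx', rfl⟩⟩)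
            rintro ⟨y, hy, hxy⟩
            obtain rfl : y = x := congrArg Prod.snd hxy
            exact hy
          rw [hcg]
          exact hcov x hx
        have e2 : Multiset.countP (fun α => ((0 : Fin h → F), x) ∈ (gm α).graph)
            Finset.univ.val = 0 := by
          rw [Multiset.countP_eq_zero]
          intro α _ hmem
          rw [LinearMap.mem_graph_iff] at hmem
          simp only [hgm, LinearMap.comp_apply, map_zero] at hmem
          exact hx hmem
        rw [e1, e2]
      · have hσc : σ c ≠ 0 := fun h0 => hc (hσ (by rw [h0, map_zero]))
        have e1 : Multiset.countP (fun W => ((c : Fin h → F), x) ∈ Submodule.map inr W)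
            (AK ::ₘ SK) = 0 := by
          rw [Multiset.countP_eq_zero]
          rintro W _ ⟨y, hy, hxy⟩
          exact hc (congrArg Prod.fst hxy).symm
        have e2 : Multiset.countP (fun α => ((c : Fin h → F), x) ∈ (gm α).graph)
            Finset.univ.val = 1 := by
          have hpred : ∀ α : K, (((c : Fin h → F), x) ∈ (gm α).graph) = (α = x * (σ c)⁻¹) := by
            intro α
            rw [eq_iff_iff, LinearMap.mem_graph_iff]
            simp only [hgm, LinearMap.comp_apply, LinearMap.mulLeft_apply]
            constructor
            · intro hx1
              rw [hx1, mul_assoc, mul_inv_cancel₀ hσc, mul_one]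
            · intro hα
              rw [hα, mul_assoc, inv_mul_cancel₀ hσc, mul_one]
          rw [Multiset.countP_congr rfl (fun α _ => hpred α), Multiset.countP_eq_card_filter]
          have h3 : Multiset.card (Finset.univ.val.filter (fun α => α = x * (σ c)⁻¹)) =
              (Finset.filter (fun α => α = x * (σ c)⁻¹) Finset.univ).card := rfl
          rw [h3]
          refine Finset.card_eq_one.mpr ⟨x * (σ c)⁻¹, ?_⟩
          ext α
          simp [Finset.mem_filter]
        rw [e1, e2]
    have hS'card : Multiset.card S' =
        ∑ i ∈ Finset.range (k + 1), Fintype.card F ^ (a + i * h) := by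
      have hKcard : Multiset.card (Finset.univ.val : Multiset K) = Fintype.card K := rfl
      have hKc : Fintype.card K = Fintype.card F ^ (a + k * h) := by
        rw [Module.card_eq_pow_finrank (K := F) (V := K), hKrk]
      rw [hS'def, Multiset.card_add, Multiset.card_map, hGdef, Multiset.card_map, hKcard,
        hSKcard, hKc, Finset.sum_range_succ]
    have hS'rk : ∀ W ∈ S', Module.finrank F W = h := by
      intro W hW
      rw [hS'def, Multiset.mem_add] at hW
      rcases hW with hW | hW
      · obtain ⟨W', hW', rfl⟩ := Multiset.mem_map.mp hW
        exact ((Submodule.equivMapOfInjective inr hinr W').symm.finrank_eq).trans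
          (hSKrk W' hW')
      · obtain ⟨α, _, rfl⟩ := Multiset.mem_map.mp hW
        exact hgraph_rk α
    -- transport along a linear equivalence
    have hVK : Module.finrank F ((Fin h → F) × K) = Module.finrank F V := by
      rw [hMrank, hV]
    obtain ⟨e⟩ := FiniteDimensional.nonempty_linearEquiv_of_finrank_eq hVK
    refine ⟨A'.map (e : ((Fin h → F) × K) →ₗ[F] V),
      S'.map (Submodule.map (e : ((Fin h → F) × K) →ₗ[F] V)), ?_, ?_, ?_, ?_⟩
    · rw [LinearEquiv.finrank_map_eq]; exact hA'
    · rw [Multiset.card_map]; exact hS'card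
    · intro W hW
      obtain ⟨W', hW', rfl⟩ := Multiset.mem_map.mp hW
      rw [LinearEquiv.finrank_map_eq]
      exact hS'rk W' hW'
    · intro v hv
      have hmc : (A'.map (e : ((Fin h → F) × K) →ₗ[F] V)) ::ₘ
          S'.map (Submodule.map (e : ((Fin h → F) × K) →ₗ[F] V)) =
          (A' ::ₘ S').map (Submodule.map (e : ((Fin h → F) × K) →ₗ[F] V)) :=
        (Multiset.map_cons _ _ _).symm
      rw [hmc, Multiset.countP_map, ← Multiset.countP_eq_card_filter]
      have hv' : e.symm v ≠ 0 := by
        intro h0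
        exact hv (by rw [← e.apply_symm_apply v, h0, map_zero])
      rw [Multiset.countP_congr rfl (fun W _ => propext (Submodule.mem_map_equiv W))]
      exact hcov' (e.symm v) hv'

theorem statement10 (F : Type*) [Field F] [Fintype F] (q r a h : ℕ)
    (hq : q = Fintype.card F) (hh : 1 ≤ h) (hha : h < a) (har : a < r)
    (hmod : r % h = a % h) :
    -- a vector space partition of `F^r` of type `h^t a^1` with
    -- `t = q^a·(q^(r−a) − 1)/(q^h − 1)`
    ∃ (A : Submodule F (Fin r → F)) (S : Multiset (Submodule F (Fin r → F))),
      Module.finrank F A = a ∧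
      Multiset.card S = q ^ a * ((q ^ (r - a) - 1) / (q ^ h - 1)) ∧
      (∀ W ∈ S, Module.finrank F W = h) ∧
      (∀ P : Submodule F (Fin r → F), Module.finrank F P = 1 →
        mult (A ::ₘ S) P = 1) := by
  classical
  subst hq
  have hq2 : 2 ≤ Fintype.card F := Fintype.one_lt_card
  have hdvd : h ∣ r - a := (Nat.modEq_iff_dvd' (le_of_lt har)).mp hmod.symm
  set k := (r - a) / h with hkdef
  have hk : k * h = r - a := Nat.div_mul_cancel hdvd
  have hrank : Module.finrank F (Fin r → F) = a + k * h := by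
    rw [Module.finrank_fin_fun]; omega
  obtain ⟨A, S, hA, hcard, hrk, hcov⟩ := main_aux F a h hh hha k (Fin r → F) hrank
  refine ⟨A, S, hA, ?_, hrk, ?_⟩
  · rw [hcard]
    have hsum : ∑ i ∈ Finset.range k, Fintype.card F ^ (a + i * h) =
        Fintype.card F ^ a * ∑ i ∈ Finset.range k, (Fintype.card F ^ h) ^ i := by
      rw [Finset.mul_sum]
      refine Finset.sum_congr rfl fun i _ => ?_
      rw [pow_add]
      congr 1
      rw [← pow_mul, mul_comm]
    have hx2 : 2 ≤ Fintype.card F ^ h :=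
      le_trans hq2 (Nat.le_self_pow (by omega) _)
    have hhk : h * k = r - a := by rw [mul_comm]; exact hk
    rw [hsum, ← geom_div_nat _ k hx2, ← pow_mul, hhk]
  · intro P hP
    obtain ⟨v, hv0, hvspan⟩ := finrank_eq_one_iff'.mp hP
    have hvV : (v : Fin r → F) ≠ 0 := fun h0 => hv0 (Subtype.ext h0)
    have hPle : ∀ W : Submodule F (Fin r → F), (P ≤ W) ↔ ((v : Fin r → F) ∈ W) := by
      intro W
      refine ⟨fun hle => hle v.2, fun hvW w hw => ?_⟩
      obtain ⟨c, hc⟩ := hvspan ⟨w, hw⟩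
      have hc' : c • (v : Fin r → F) = w := congrArg Subtype.val hc
      rw [← hc']
      exact W.smul_mem c hvW
    unfold mult
    rw [Multiset.countP_congr rfl (fun W _ => propext (hPle W))]
    exact hcov (v : Fin r → F) hvV
end
end

section
/- Let q be a prime power and let r > a > h ≥ 1 be integers with r ≡ a (mod h). Let 𝒱 be a vector space partition of F_q^r of type h^{t} a^{1}, let A be its a-dimensional member and let 𝒮 be the multiset of its h-dimensional members. Then necessarily t = q^a·(q^{r−a}−1)/(q^h−1), and with s := q^{a−h}·(q^{r−a}−1)/(q^h−1) the following hold: every point of F_q^r is contained in at most one element of 𝒮; every hyperplane of F_q^r not containing A contains exactly s elements of 𝒮; and every hyperplane of F_q^r containing A contains exactly s − q^{a−h} elements of 𝒮. In particular, 𝒮 is a faithful projective h-(t, r, s, 1)_q system. -/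
open scoped Classical

noncomputable section

/-- `S` is a faithful projective `h-(n,r,s,μ)_q` system in `F^r`. -/
def IsFaithfulSystemMu {F : Type*} [Field F] [Fintype F] {r : ℕ} (h n s μ : ℕ)
    (S : Multiset (Submodule F (Fin r → F))) : Prop :=
  Multiset.card S = n ∧ (∀ W ∈ S, Module.finrank F W = h) ∧
  (∀ H : Submodule F (Fin r → F), Module.finrank F H = r - 1 → cnt S H ≤ s) ∧
  (∃ H : Submodule F (Fin r → F), Module.finrank F H = r - 1 ∧ cnt S H = s) ∧
  (∀ P : Submodule F (Fin r → F), Module.finrank F P = 1 → mult S P ≤ μ) ∧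
  (∃ P : Submodule F (Fin r → F), Module.finrank F P = 1 ∧ mult S P = μ)

section Aux

variable {F : Type*} [Field F] [Fintype F] {r : ℕ}

/-- number of nonzero vectors in a submodule of `F^r` -/
def nzcard (U : Submodule F (Fin r → F)) : ℕ :=
  (Finset.univ.filter (fun v : Fin r → F => v ∈ U ∧ v ≠ 0)).card

lemma nzcard_eq (U : Submodule F (Fin r → F)) :
    nzcard U = Fintype.card F ^ Module.finrank F U - 1 := by
  have h0 : (0 : Fin r → F) ∈ Finset.univ.filter (fun v : Fin r → F => v ∈ U) := by
    simp [U.zero_mem]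
  have hcard : (Finset.univ.filter (fun v : Fin r → F => v ∈ U)).card
      = Fintype.card F ^ Module.finrank F U := by
    have h1 : Fintype.card ↥U = (Finset.univ.filter (fun v : Fin r → F => v ∈ U)).card :=
      Fintype.card_of_subtype _ (fun x => by simp)
    rw [← h1]
    exact Module.card_eq_pow_finrank
  have hset : Finset.univ.filter (fun v : Fin r → F => v ∈ U ∧ v ≠ 0)
      = (Finset.univ.filter (fun v : Fin r → F => v ∈ U)).erase 0 := by
    ext v
    simp [Finset.mem_erase, and_comm]
  rw [nzcard, hset, Finset.card_erase_of_mem h0, hcard]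

lemma fubini (M : Multiset (Submodule F (Fin r → F))) (U : Submodule F (Fin r → F)) :
    (M.map (fun W => nzcard (W ⊓ U))).sum =
      ∑ v ∈ Finset.univ.filter (fun v : Fin r → F => v ∈ U ∧ v ≠ 0),
        Multiset.countP (fun W => v ∈ W) M := by
  induction M using Multiset.induction with
  | empty => simp
  | cons W M ih =>
    simp only [Multiset.map_cons, Multiset.sum_cons, Multiset.countP_cons,
      Finset.sum_add_distrib, ← ih]
    have h1 : nzcard (W ⊓ U) =
        ∑ v ∈ Finset.univ.filter (fun v : Fin r → F => v ∈ U ∧ v ≠ 0),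
          (if v ∈ W then 1 else 0) := by
      rw [Finset.sum_boole, Nat.cast_id, Finset.filter_filter, nzcard]
      congr 1
      ext v
      simp only [Finset.mem_filter, Finset.mem_univ, true_and, Submodule.mem_inf]
      tauto
    omega

lemma sum_split {α : Type*} (p : α → Prop) [DecidablePred p] (g : α → ℕ) (X Y : ℕ) :
    ∀ M : Multiset α, (∀ W ∈ M, g W = if p W then X else Y) →
      (M.map g).sum + M.countP p * Y = M.countP p * X + Multiset.card M * Y := by
  intro M
  induction M using Multiset.induction with
  | empty => simp
  | cons W M ih =>
    intro hg
    have hW := hg W (Multiset.mem_cons_self W M)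
    have ihh := ih (fun x hx => hg x (Multiset.mem_cons_of_mem hx))
    simp only [Multiset.map_cons, Multiset.sum_cons, Multiset.countP_cons,
      Multiset.card_cons, hW]
    by_cases hp : p W
    · simp only [if_pos hp]
      zify at ihh ⊢
      linear_combination ihh
    · simp only [if_neg hp]
      zify at ihh ⊢
      linear_combination ihh

lemma finrank_inf_of_not_le (W H : Submodule F (Fin r → F)) (hr : 0 < r)
    (hH : Module.finrank F H = r - 1) (hWH : ¬ W ≤ H) :
    Module.finrank F ↥(W ⊓ H) + 1 = Module.finrank F ↥W := by
  have hV : Module.finrank F (Fin r → F) = r := Module.finrank_fin_fun F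
  have h1 : H < W ⊔ H := lt_of_le_of_ne le_sup_right
    (fun e => hWH (le_sup_left.trans_eq e.symm))
  have h2 := Submodule.finrank_lt_finrank_of_lt h1
  have h3 : Module.finrank F ↥(W ⊔ H) ≤ Module.finrank F (Fin r → F) :=
    Submodule.finrank_le _
  rw [hV] at h3
  have h4 := Submodule.finrank_sup_add_finrank_inf_eq W H
  omega

end Aux

theorem statement11 (F : Type*) [Field F] [Fintype F] (q r a h t : ℕ)
    (hq : q = Fintype.card F) (hh : 1 ≤ h) (hha : h < a) (har : a < r)
    (hmod : r % h = a % h)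
    -- `A ::ₘ S` is a vector space partition of `F^r` of type `h^t a^1`:
    (A : Submodule F (Fin r → F)) (S : Multiset (Submodule F (Fin r → F)))
    (hA : Module.finrank F A = a)
    (hcard : Multiset.card S = t)
    (hdim : ∀ W ∈ S, Module.finrank F W = h)
    (hpart : ∀ P : Submodule F (Fin r → F), Module.finrank F P = 1 →
      mult (A ::ₘ S) P = 1) :
    t = q ^ a * ((q ^ (r - a) - 1) / (q ^ h - 1)) ∧
    (∀ P : Submodule F (Fin r → F), Module.finrank F P = 1 → mult S P ≤ 1) ∧
    (∀ H : Submodule F (Fin r → F), Module.finrank F H = r - 1 → ¬ A ≤ H →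
      cnt S H = q ^ (a - h) * ((q ^ (r - a) - 1) / (q ^ h - 1))) ∧
    (∀ H : Submodule F (Fin r → F), Module.finrank F H = r - 1 → A ≤ H →
      cnt S H = q ^ (a - h) * ((q ^ (r - a) - 1) / (q ^ h - 1)) - q ^ (a - h)) ∧
    IsFaithfulSystemMu h t (q ^ (a - h) * ((q ^ (r - a) - 1) / (q ^ h - 1))) 1 S := by
  have hq1 : 1 < q := by rw [hq]; exact Fintype.one_lt_card
  have hrV : Module.finrank F (Fin r → F) = r := Module.finrank_fin_fun F
  have hr0 : 0 < r := by omega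
  -- basic cast facts
  have hp1 : ∀ n : ℕ, 1 ≤ q ^ n := fun n => Nat.one_le_pow _ _ (by omega)
  have hx1 : (1 : ℤ) < (q : ℤ) := by exact_mod_cast hq1
  -- every nonzero vector lies in exactly one member
  have hpt : ∀ v : Fin r → F, v ≠ 0 →
      Multiset.countP (fun W => v ∈ W) (A ::ₘ S) = 1 := by
    intro v hv
    have h1 := hpart (Submodule.span F {v}) (finrank_span_singleton hv)
    rw [mult] at h1
    rw [← h1]
    refine Multiset.countP_congr rfl (fun W _ => ?_)
    rw [eq_iff_iff]
    exact (Submodule.span_singleton_le_iff_mem v W).symm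
  -- master counting equation
  have masterEq : ∀ U : Submodule F (Fin r → F),
      nzcard U = nzcard (A ⊓ U) + (S.map (fun W => nzcard (W ⊓ U))).sum := by
    intro U
    have hf := fubini (A ::ₘ S) U
    rw [Multiset.map_cons, Multiset.sum_cons] at hf
    rw [Finset.sum_congr rfl
      (fun v hv => hpt v (Finset.mem_filter.mp hv).2.2)] at hf
    rw [Finset.sum_const, smul_eq_mul, mul_one] at hf
    exact hf.symm
  -- divisibility
  have hdvd' : h ∣ r - a := (Nat.modEq_iff_dvd' (le_of_lt har)).mp hmod.symm
  have hpow_dvd : q ^ h - 1 ∣ q ^ (r - a) - 1 := by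
    obtain ⟨k, hk⟩ := hdvd'
    rw [hk, pow_mul]
    simpa using Nat.sub_dvd_pow_sub_pow (q ^ h) 1 k
  set D := (q ^ (r - a) - 1) / (q ^ h - 1) with hDdef
  have hD : (q ^ h - 1) * D = q ^ (r - a) - 1 := Nat.mul_div_cancel' hpow_dvd
  have hDZ : ((q : ℤ) ^ h - 1) * (D : ℤ) = (q : ℤ) ^ (r - a) - 1 := by
    zify [hp1 h, hp1 (r - a)] at hD
    exact hD
  have hD1 : 1 ≤ D := by
    rcases Nat.eq_zero_or_pos D with h0 | h0
    · rw [h0, mul_zero] at hD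
      have h2 : 2 ≤ q ^ (r - a) := by
        calc 2 ≤ q := hq1
        _ = q ^ 1 := (pow_one q).symm
        _ ≤ q ^ (r - a) := Nat.pow_le_pow_right (by omega) (by omega)
      omega
    · exact h0
  -- global count : q^r - 1 = (q^a - 1) + t*(q^h - 1)
  have hSum_top : (S.map (fun W => nzcard (W ⊓ (⊤ : Submodule F (Fin r → F))))).sum
      = t * (q ^ h - 1) := by
    have hmc : (S.map (fun W => nzcard (W ⊓ (⊤ : Submodule F (Fin r → F)))))
        = S.map (fun _ => q ^ h - 1) := by
      refine Multiset.map_congr rfl (fun W hW => ?_)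
      rw [inf_top_eq, nzcard_eq, hdim W hW, hq]
    rw [hmc, Multiset.map_const', Multiset.sum_replicate, hcard, smul_eq_mul]
  have hTop : q ^ r - 1 = (q ^ a - 1) + t * (q ^ h - 1) := by
    have hm := masterEq ⊤
    rw [hSum_top, inf_top_eq, nzcard_eq, nzcard_eq, hA, ← hq, finrank_top, hrV] at hm
    exact hm
  have hTopZ : (q : ℤ) ^ r - 1 = ((q : ℤ) ^ a - 1) + (t : ℤ) * ((q : ℤ) ^ h - 1) := by
    zify [hp1 r, hp1 a, hp1 h] at hTop
    exact hTop
  have hxh : ((q : ℤ) ^ h - 1) ≠ 0 := by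
    have : (1 : ℤ) < (q : ℤ) ^ h := one_lt_pow₀ hx1 (by omega)
    linarith
  have hra : a + (r - a) = r := by omega
  have hT : (t : ℤ) = (q : ℤ) ^ a * (D : ℤ) := by
    refine mul_right_cancel₀ hxh ?_
    calc (t : ℤ) * ((q : ℤ) ^ h - 1) = (q : ℤ) ^ r - (q : ℤ) ^ a := by linarith [hTopZ]
    _ = (q : ℤ) ^ a * ((q : ℤ) ^ (r - a) - 1) := by
        rw [mul_sub, mul_one, ← pow_add, hra]
    _ = (q : ℤ) ^ a * (((q : ℤ) ^ h - 1) * (D : ℤ)) := by rw [hDZ]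
    _ = (q : ℤ) ^ a * (D : ℤ) * ((q : ℤ) ^ h - 1) := by ring
  have htD : t = q ^ a * D := by exact_mod_cast hT
  -- hyperplane master equation
  have hypEq : ∀ H : Submodule F (Fin r → F), Module.finrank F H = r - 1 →
      (q ^ (r - 1) - 1) + (cnt S H) * (q ^ (h - 1) - 1)
        = (q ^ (Module.finrank F ↥(A ⊓ H)) - 1)
          + ((cnt S H) * (q ^ h - 1) + t * (q ^ (h - 1) - 1)) := by
    intro H hH
    have hm := masterEq H
    have hsplit := sum_split (fun W => W ≤ H) (fun W => nzcard (W ⊓ H))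
      (q ^ h - 1) (q ^ (h - 1) - 1) S (fun W hW => ?_)
    · have hc : Multiset.countP (fun W => W ≤ H) S = cnt S H := rfl
      rw [hcard, hc] at hsplit
      rw [nzcard_eq, hH, ← hq] at hm
      rw [nzcard_eq, ← hq] at hm
      rw [← hsplit, hm]
      ring
    · show nzcard (W ⊓ H) = if W ≤ H then q ^ h - 1 else q ^ (h - 1) - 1
      by_cases hWH : W ≤ H
      · rw [if_pos hWH, inf_eq_left.mpr hWH, nzcard_eq, hdim W hW, hq]
      · rw [if_neg hWH, nzcard_eq, ← hq]
        have := finrank_inf_of_not_le W H hr0 hH hWH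
        rw [hdim W hW] at this
        congr 2
        omega
  -- dimension of A ⊓ H
  have hAinf : ∀ H : Submodule F (Fin r → F), Module.finrank F H = r - 1 →
      ¬ A ≤ H → Module.finrank F ↥(A ⊓ H) = a - 1 := by
    intro H hH hAH
    have := finrank_inf_of_not_le A H hr0 hH hAH
    rw [hA] at this
    omega
  -- case: hyperplane not containing A
  have case1 : ∀ H : Submodule F (Fin r → F), Module.finrank F H = r - 1 →
      ¬ A ≤ H → cnt S H = q ^ (a - h) * D := by
    intro H hH hAH
    have hE := hypEq H hH
    rw [hAinf H hH hAH] at hE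
    have hEZ : ((q : ℤ) ^ (r - 1) - 1) + (cnt S H : ℤ) * ((q : ℤ) ^ (h - 1) - 1)
        = ((q : ℤ) ^ (a - 1) - 1)
          + ((cnt S H : ℤ) * ((q : ℤ) ^ h - 1) + (t : ℤ) * ((q : ℤ) ^ (h - 1) - 1)) := by
      zify [hp1 (r - 1), hp1 (a - 1), hp1 h, hp1 (h - 1)] at hE
      exact hE
    have hcZ : (cnt S H : ℤ) = (q : ℤ) ^ (a - h) * (D : ℤ) := by
      have hfac : (0 : ℤ) < (q : ℤ) ^ (h - 1) * ((q : ℤ) - 1) :=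
        mul_pos (pow_pos (by exact_mod_cast Nat.zero_lt_of_lt hq1) _) (sub_pos.mpr hx1)
      refine mul_right_cancel₀ hfac.ne' ?_
      have e1 : (q : ℤ) ^ h = (q : ℤ) ^ (h - 1) * (q : ℤ) := by
        rw [← pow_succ]; congr 1; omega
      have e2 : (q : ℤ) ^ a = (q : ℤ) ^ (a - h) * ((q : ℤ) ^ (h - 1) * (q : ℤ)) := by
        rw [← pow_succ, ← pow_add]; congr 1; omega
      have e3 : (q : ℤ) ^ (a - 1) = (q : ℤ) ^ (a - h) * (q : ℤ) ^ (h - 1) := by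
        rw [← pow_add]; congr 1; omega
      have e4 : (q : ℤ) ^ (r - 1)
          = (q : ℤ) ^ (a - h) * (q : ℤ) ^ (h - 1) * (q : ℤ) ^ (r - a) := by
        rw [← pow_add, ← pow_add]; congr 1; omega
      rw [e1] at hEZ hDZ
      rw [e3, e4] at hEZ
      rw [e2] at hT
      linear_combination -hEZ - ((q : ℤ) ^ (h - 1) - 1) * hT
        - (q : ℤ) ^ (a - h) * (q : ℤ) ^ (h - 1) * hDZ
    exact_mod_cast hcZ
  -- case: hyperplane containing A
  have case2 : ∀ H : Submodule F (Fin r → F), Module.finrank F H = r - 1 →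
      A ≤ H → cnt S H = q ^ (a - h) * D - q ^ (a - h) := by
    intro H hH hAH
    have hE := hypEq H hH
    rw [inf_eq_left.mpr hAH, hA] at hE
    have hEZ : ((q : ℤ) ^ (r - 1) - 1) + (cnt S H : ℤ) * ((q : ℤ) ^ (h - 1) - 1)
        = ((q : ℤ) ^ a - 1)
          + ((cnt S H : ℤ) * ((q : ℤ) ^ h - 1) + (t : ℤ) * ((q : ℤ) ^ (h - 1) - 1)) := by
      zify [hp1 (r - 1), hp1 a, hp1 h, hp1 (h - 1)] at hE
      exact hE
    have hcZ : (cnt S H : ℤ) = (q : ℤ) ^ (a - h) * ((D : ℤ) - 1) := by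
      have hfac : (0 : ℤ) < (q : ℤ) ^ (h - 1) * ((q : ℤ) - 1) :=
        mul_pos (pow_pos (by exact_mod_cast Nat.zero_lt_of_lt hq1) _) (sub_pos.mpr hx1)
      refine mul_right_cancel₀ hfac.ne' ?_
      have e1 : (q : ℤ) ^ h = (q : ℤ) ^ (h - 1) * (q : ℤ) := by
        rw [← pow_succ]; congr 1; omega
      have e2 : (q : ℤ) ^ a = (q : ℤ) ^ (a - h) * ((q : ℤ) ^ (h - 1) * (q : ℤ)) := by
        rw [← pow_succ, ← pow_add]; congr 1; omega
      have e4 : (q : ℤ) ^ (r - 1)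
          = (q : ℤ) ^ (a - h) * (q : ℤ) ^ (h - 1) * (q : ℤ) ^ (r - a) := by
        rw [← pow_add, ← pow_add]; congr 1; omega
      rw [e1] at hEZ hDZ
      rw [e4, e2] at hEZ
      rw [e2] at hT
      linear_combination -hEZ - ((q : ℤ) ^ (h - 1) - 1) * hT
        - (q : ℤ) ^ (a - h) * (q : ℤ) ^ (h - 1) * hDZ
    have hle : q ^ (a - h) ≤ q ^ (a - h) * D := Nat.le_mul_of_pos_right _ (by omega)
    have : (cnt S H : ℤ) = ((q ^ (a - h) * D - q ^ (a - h) : ℕ) : ℤ) := by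
      rw [hcZ]
      push_cast [hle]
      ring
    exact_mod_cast this
  -- mult S P ≤ 1 everywhere
  have hmu : ∀ P : Submodule F (Fin r → F), Module.finrank F P = 1 → mult S P ≤ 1 := by
    intro P hP
    have h1 := hpart P hP
    rw [mult, Multiset.countP_cons] at h1
    rw [mult]
    omega
  -- a hyperplane not containing A
  have hexH : ∃ H : Submodule F (Fin r → F),
      Module.finrank F H = r - 1 ∧ ¬ A ≤ H := by
    have hAne : A ≠ ⊥ := by
      intro hbot
      rw [hbot] at hA
      simp at hA
      omega
    obtain ⟨v, hvA, hv0⟩ := Submodule.exists_mem_ne_zero_of_ne_bot hAne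
    obtain ⟨W, hW⟩ := Submodule.exists_isCompl (Submodule.span F {v})
    have hdimW : Module.finrank F ↥W = r - 1 := by
      have h1 := Submodule.finrank_add_eq_of_isCompl hW
      rw [finrank_span_singleton hv0, hrV] at h1
      omega
    refine ⟨W, hdimW, fun hle => ?_⟩
    have hvW : v ∈ W := hle hvA
    have : v ∈ Submodule.span F {v} ⊓ W :=
      ⟨Submodule.mem_span_singleton_self v, hvW⟩
    rw [hW.inf_eq_bot] at this
    exact hv0 this
  -- a point outside A
  have hexP : ∃ P : Submodule F (Fin r → F),
      Module.finrank F P = 1 ∧ mult S P = 1 := by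
    have hAlt : A < ⊤ := by
      refine lt_top_iff_ne_top.mpr (fun htop => ?_)
      rw [htop, finrank_top, hrV] at hA
      omega
    obtain ⟨v, -, hvA⟩ := SetLike.exists_of_lt hAlt
    have hv0 : v ≠ 0 := fun hz => hvA (hz ▸ A.zero_mem)
    refine ⟨Submodule.span F {v}, finrank_span_singleton hv0, ?_⟩
    have h1 := hpart (Submodule.span F {v}) (finrank_span_singleton hv0)
    rw [mult, Multiset.countP_cons, if_neg
      (fun hle => hvA ((Submodule.span_singleton_le_iff_mem v A).mp hle))] at h1
    rw [mult]
    omega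
  refine ⟨htD, hmu, case1, case2, hcard, hdim, ?_, ?_, hmu, hexP⟩
  · intro H hH
    by_cases hAH : A ≤ H
    · rw [case2 H hH hAH]
      exact Nat.sub_le _ _
    · rw [case1 H hH hAH]
  · obtain ⟨H, hH, hAH⟩ := hexH
    exact ⟨H, hH, case1 H hH hAH⟩
end
end

section
/- Let q be a prime power and r ≥ a ≥ h ≥ 1. Let 𝒮₁ be a faithful projective h-(n₁,r,s₁)_q system in F_q^r, let A be an a-dimensional subspace of F_q^r such that every hyperplane of F_q^r containing A contains at most s₀ elements of 𝒮₁, and let 𝒮₂ be a multiset of n₂ h-dimensional subspaces of F_q^r all contained in A such that every (a−1)-dimensional subspace of A contains at most s₂ elements of 𝒮₂ (counted with multiplicity). Then every hyperplane of F_q^r contains at most max{s₁ + s₂, s₀ + n₂} elements of the multiset union 𝒮₁ ∪ 𝒮₂, which consists of n₁ + n₂ h-dimensional subspaces of F_q^r; consequently n_q(r,h; max{s₁+s₂, s₀+n₂}) ≥ n₁ + n₂. -/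
open scoped Classical

noncomputable section

theorem statement12 (F : Type*) [Field F] [Fintype F] (q r a h n₁ n₂ s₀ s₁ s₂ : ℕ)
    (hq : q = Fintype.card F) (hh : 1 ≤ h) (hha : h ≤ a) (har : a ≤ r)
    -- `S₁` is a faithful projective `h-(n₁,r,s₁)_q` system:
    (S₁ : Multiset (Submodule F (Fin r → F)))
    (hcard₁ : Multiset.card S₁ = n₁)
    (hdim₁ : ∀ W ∈ S₁, Module.finrank F W = h)
    (hhyp₁ : ∀ H : Submodule F (Fin r → F), Module.finrank F H = r - 1 → cnt S₁ H ≤ s₁)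
    (hhyp₁' : ∃ H : Submodule F (Fin r → F), Module.finrank F H = r - 1 ∧ cnt S₁ H = s₁)
    -- `A` is an `a`-space such that every hyperplane containing `A` contains
    -- at most `s₀` elements of `S₁`:
    (A : Submodule F (Fin r → F)) (hA : Module.finrank F A = a)
    (hA₀ : ∀ H : Submodule F (Fin r → F), Module.finrank F H = r - 1 → A ≤ H →
      cnt S₁ H ≤ s₀)
    -- `S₂` is a multiset of `n₂` `h`-spaces inside `A` such that every hyperplane of `A`
    -- contains at most `s₂` of them:
    (S₂ : Multiset (Submodule F (Fin r → F)))
    (hcard₂ : Multiset.card S₂ = n₂)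
    (hdim₂ : ∀ W ∈ S₂, Module.finrank F W = h ∧ W ≤ A)
    (hhyp₂ : ∀ B : Submodule F (Fin r → F), B ≤ A → Module.finrank F B = a - 1 →
      cnt S₂ B ≤ s₂) :
    Multiset.card (S₁ + S₂) = n₁ + n₂ ∧
    (∀ W ∈ S₁ + S₂, Module.finrank F W = h) ∧
    (∀ H : Submodule F (Fin r → F), Module.finrank F H = r - 1 →
      cnt (S₁ + S₂) H ≤ max (s₁ + s₂) (s₀ + n₂)) ∧
    -- consequently `n_q(r,h; max{s₁+s₂, s₀+n₂}) ≥ n₁ + n₂`: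
    (∃ S : Multiset (Submodule F (Fin r → F)),
      Multiset.card S = n₁ + n₂ ∧ (∀ W ∈ S, Module.finrank F W ≤ h) ∧
      ∀ H : Submodule F (Fin r → F), Module.finrank F H = r - 1 →
        cnt S H ≤ max (s₁ + s₂) (s₀ + n₂)) := by

  have hr : 1 ≤ r := le_trans (le_trans hh hha) har
  have ha1 : 1 ≤ a := le_trans hh hha
  have hmain : ∀ H : Submodule F (Fin r → F), Module.finrank F H = r - 1 →
      cnt (S₁ + S₂) H ≤ max (s₁ + s₂) (s₀ + n₂) := by
    intro H hH
    have hsplit : cnt (S₁ + S₂) H = cnt S₁ H + cnt S₂ H := Multiset.countP_add _ _ _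
    by_cases hAH : A ≤ H
    · have h1 : cnt S₁ H ≤ s₀ := hA₀ H hH hAH
      have h2 : cnt S₂ H ≤ n₂ := hcard₂ ▸ Multiset.countP_le_card _ _
      calc cnt (S₁ + S₂) H = cnt S₁ H + cnt S₂ H := hsplit
        _ ≤ s₀ + n₂ := Nat.add_le_add h1 h2
        _ ≤ max (s₁ + s₂) (s₀ + n₂) := le_max_right _ _
    · have h1 : cnt S₁ H ≤ s₁ := hhyp₁ H hH
      have hlt : H < A ⊔ H := lt_of_le_of_ne le_sup_right (fun he => hAH (he ▸ le_sup_left))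
      have hsupr : Module.finrank F (A ⊔ H : Submodule F (Fin r → F)) = r := by
        have h3 := Submodule.finrank_lt_finrank_of_lt hlt
        have h4 : Module.finrank F (A ⊔ H : Submodule F (Fin r → F)) ≤ r := by
          have := Submodule.finrank_le (A ⊔ H : Submodule F (Fin r → F))
          simpa [Module.finrank_fin_fun] using this
        omega
      have hdiminf : Module.finrank F (A ⊓ H : Submodule F (Fin r → F)) = a - 1 := by
        have h5 := Submodule.finrank_sup_add_finrank_inf_eq A H
        rw [hsupr, hA, hH] at h5
        omega
      have h2 : cnt S₂ H = cnt S₂ (A ⊓ H) := by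
        apply Multiset.countP_congr rfl
        intro W hW
        simp only [eq_iff_iff]
        exact ⟨fun hWH => le_inf (hdim₂ W hW).2 hWH, fun h' => le_trans h' inf_le_right⟩
      have h2' : cnt S₂ (A ⊓ H) ≤ s₂ := hhyp₂ _ inf_le_left hdiminf
      calc cnt (S₁ + S₂) H = cnt S₁ H + cnt S₂ H := hsplit
        _ ≤ s₁ + s₂ := Nat.add_le_add h1 (h2 ▸ h2')
        _ ≤ max (s₁ + s₂) (s₀ + n₂) := le_max_left _ _
  have hdims : ∀ W ∈ S₁ + S₂, Module.finrank F W = h := by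
    intro W hW
    rcases Multiset.mem_add.mp hW with h' | h'
    · exact hdim₁ W h'
    · exact (hdim₂ W h').1
  refine ⟨by simp [hcard₁, hcard₂], hdims, hmain, ⟨S₁ + S₂, by simp [hcard₁, hcard₂],
    fun W hW => le_of_eq (hdims W hW), hmain⟩⟩
end
end

section
/- Let q be a prime power and k ≥ 1 an integer. Let σ ∈ ℕ and let ε_1, …, ε_{k−1} be integers with 0 ≤ ε_i ≤ q−1 for all i, and suppose d := σ·q^{k−1} − Σ_{i=1}^{k−1} ε_i·q^{i−1} ≥ 1. Then g_q(k,d) = σ·[k]_q − Σ_{i=1}^{k−1} ε_i·[i]_q; consequently, an integer n satisfies n = g_q(k,d) if and only if n = σ·[k]_q − Σ_{i=1}^{k−1} ε_i·[i]_q, which is in turn equivalent to n − d = σ·[k−1]_q − Σ_{i=1}^{k−1} ε_i·[i−1]_q. -/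
noncomputable section

lemma ceil_aux (d a r' Q : ℕ) (hQ : 1 ≤ Q) (hd : 1 ≤ d) (hr : r' + 1 ≤ Q)
    (h : d + r' = a * Q) : (d + Q - 1) / Q = a := by
  have h2 : d + Q - 1 = (Q - 1 - r') + a * Q := by
    generalize a * Q = m at h ⊢; omega
  rw [h2, Nat.add_mul_div_right _ _ (by omega : 0 < Q),
    Nat.div_eq_of_lt (by omega), Nat.zero_add]

theorem statement13 (q k : ℕ) (hq : IsPrimePow q) (hk : 1 ≤ k)
    (σ : ℕ) (ε : ℕ → ℤ)
    (hε : ∀ i ∈ Finset.Icc 1 (k - 1), 0 ≤ ε i ∧ ε i ≤ (q : ℤ) - 1)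
    (d : ℕ) (hd : 1 ≤ d)
    (hdef : (d : ℤ) = (σ : ℤ) * (q : ℤ) ^ (k - 1) -
      ∑ i ∈ Finset.Icc 1 (k - 1), ε i * (q : ℤ) ^ (i - 1)) :
    (griesmer q k d : ℤ) =
      (σ : ℤ) * (gNum q k : ℤ) - ∑ i ∈ Finset.Icc 1 (k - 1), ε i * (gNum q i : ℤ) ∧
    ∀ n : ℤ,
      (n = (griesmer q k d : ℤ) ↔
        n = (σ : ℤ) * (gNum q k : ℤ) -
          ∑ i ∈ Finset.Icc 1 (k - 1), ε i * (gNum q i : ℤ)) ∧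
      ((n = (σ : ℤ) * (gNum q k : ℤ) -
          ∑ i ∈ Finset.Icc 1 (k - 1), ε i * (gNum q i : ℤ)) ↔
        n - (d : ℤ) = (σ : ℤ) * (gNum q (k - 1) : ℤ) -
          ∑ i ∈ Finset.Icc 1 (k - 1), ε i * (gNum q (i - 1) : ℤ)) := by
  have hq2 : 2 ≤ q := hq.two_le
  have hgcast : ∀ m : ℕ, (gNum q m : ℤ) = ∑ j ∈ Finset.range m, (q : ℤ) ^ j := by
    intro m; simp [gNum]
  -- geometric sum fact
  have hgeom : ∀ m : ℕ, ((q : ℤ) - 1) * ∑ j ∈ Finset.range m, (q : ℤ) ^ j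
      = (q : ℤ) ^ m - 1 := by
    intro m
    rw [mul_comm]; exact geom_sum_mul _ _
  -- per-term computation of the ceiling terms
  have key : ∀ i ∈ Finset.range k, (((d + q ^ i - 1) / q ^ i : ℕ) : ℤ)
      = (σ : ℤ) * (q : ℤ) ^ (k - 1 - i)
        - ∑ j ∈ Finset.Icc (i + 1) (k - 1), ε j * (q : ℤ) ^ (j - 1 - i) := by
    intro i hi
    rw [Finset.mem_range] at hi
    have hik : i ≤ k - 1 := by omega
    set A : ℤ := (σ : ℤ) * (q : ℤ) ^ (k - 1 - i)
        - ∑ j ∈ Finset.Icc (i + 1) (k - 1), ε j * (q : ℤ) ^ (j - 1 - i) with hA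
    set r : ℤ := ∑ j ∈ Finset.Icc 1 i, ε j * (q : ℤ) ^ (j - 1) with hrdef
    -- A * q^i = σ q^{k-1} - Σ_{j>i} ε_j q^{j-1}
    have hAq : A * (q : ℤ) ^ i = (σ : ℤ) * (q : ℤ) ^ (k - 1)
        - ∑ j ∈ Finset.Icc (i + 1) (k - 1), ε j * (q : ℤ) ^ (j - 1) := by
      rw [hA, sub_mul, Finset.sum_mul, mul_assoc, ← pow_add]
      congr 1
      · congr 2; omega
      · apply Finset.sum_congr rfl
        intro j hj
        rw [Finset.mem_Icc] at hj
        rw [mul_assoc, ← pow_add]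
        congr 2
        omega
    -- split the sum in hdef
    have hsplit : (∑ j ∈ Finset.Icc 1 i, ε j * (q : ℤ) ^ (j - 1))
        + ∑ j ∈ Finset.Icc (i + 1) (k - 1), ε j * (q : ℤ) ^ (j - 1)
        = ∑ j ∈ Finset.Icc 1 (k - 1), ε j * (q : ℤ) ^ (j - 1) := by
      rw [show (1 : ℕ) = 0 + 1 by rfl, Finset.Icc_add_one_left_eq_Ioc, Finset.Icc_add_one_left_eq_Ioc,
        Nat.zero_add, Finset.Icc_add_one_left_eq_Ioc]
      exact Finset.sum_Ioc_consecutive _ (Nat.zero_le i) hik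
    have hdA : (d : ℤ) = A * (q : ℤ) ^ i - r := by
      rw [hAq, hdef, hrdef, ← hsplit]
      ring
    -- bounds on r
    have hr0 : 0 ≤ r := by
      apply Finset.sum_nonneg
      intro j hj
      rw [Finset.mem_Icc] at hj
      have h1 := hε j (Finset.mem_Icc.mpr ⟨hj.1, le_trans hj.2 hik⟩)
      have h2 : (0 : ℤ) ≤ (q : ℤ) ^ (j - 1) := by positivity
      exact mul_nonneg h1.1 h2
    have hr1 : r ≤ (q : ℤ) ^ i - 1 := by
      have hb : r ≤ ∑ j ∈ Finset.Icc 1 i, ((q : ℤ) - 1) * (q : ℤ) ^ (j - 1) := by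
        apply Finset.sum_le_sum
        intro j hj
        rw [Finset.mem_Icc] at hj
        have h1 := hε j (Finset.mem_Icc.mpr ⟨hj.1, le_trans hj.2 hik⟩)
        have h2 : (0 : ℤ) ≤ (q : ℤ) ^ (j - 1) := by positivity
        exact mul_le_mul_of_nonneg_right h1.2 h2
      have hb2 : ∑ j ∈ Finset.Icc 1 i, ((q : ℤ) - 1) * (q : ℤ) ^ (j - 1)
          = (q : ℤ) ^ i - 1 := by
        rw [← Finset.mul_sum, ← hgeom i]
        congr 1
        rw [show Finset.Icc 1 i = Finset.Ico 1 (i + 1) by rw [Finset.Ico_add_one_right_eq_Icc],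
          Finset.sum_Ico_eq_sum_range]
        simp
      linarith
    have hq1 : (1 : ℤ) ≤ (q : ℤ) := by exact_mod_cast (by omega : 1 ≤ q)
    have hqi1 : (1 : ℤ) ≤ (q : ℤ) ^ i := one_le_pow₀ hq1
    have hd1 : (1 : ℤ) ≤ (d : ℤ) := by exact_mod_cast hd
    -- A > 0
    have hApos : 0 ≤ A := by
      by_contra hcon
      push_neg at hcon
      have : A * (q : ℤ) ^ i ≤ 0 := mul_nonpos_of_nonpos_of_nonneg hcon.le (by linarith)
      linarith
    obtain ⟨a, ha⟩ : ∃ a : ℕ, (a : ℤ) = A := ⟨A.toNat, Int.toNat_of_nonneg hApos⟩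
    obtain ⟨r', hr'⟩ : ∃ r' : ℕ, (r' : ℤ) = r := ⟨r.toNat, Int.toNat_of_nonneg hr0⟩
    have hnat : d + r' = a * q ^ i := by
      have : ((d : ℤ)) + (r' : ℤ) = (a : ℤ) * ((q : ℤ) ^ i) := by
        rw [ha, hr', hdA]; ring
      exact_mod_cast this
    have hrb : r' + 1 ≤ q ^ i := by
      have : (r' : ℤ) + 1 ≤ (q : ℤ) ^ i := by rw [hr']; linarith
      exact_mod_cast this
    have hQ1 : 1 ≤ q ^ i := Nat.one_le_pow _ _ (by omega)
    rw [ceil_aux d a r' (q ^ i) hQ1 hd hrb hnat, ha]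
  -- main equality
  have main : (griesmer q k d : ℤ) =
      (σ : ℤ) * (gNum q k : ℤ) - ∑ i ∈ Finset.Icc 1 (k - 1), ε i * (gNum q i : ℤ) := by
    have h0 : (griesmer q k d : ℤ)
        = ∑ i ∈ Finset.range k, (((d + q ^ i - 1) / q ^ i : ℕ) : ℤ) := by
      simp [griesmer]
    rw [h0, Finset.sum_congr rfl key, Finset.sum_sub_distrib]
    congr 1
    · rw [← Finset.mul_sum, hgcast,
        Finset.sum_range_reflect (fun t => (q : ℤ) ^ t) k]
    · rw [Finset.sum_comm' (t' := Finset.Icc 1 (k - 1)) (s' := fun j => Finset.range j)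
        (by intro x y; simp only [Finset.mem_range, Finset.mem_Icc]; omega)]
      apply Finset.sum_congr rfl
      intro j hj
      rw [← Finset.mul_sum, hgcast,
        Finset.sum_range_reflect (fun t => (q : ℤ) ^ t) j]
  -- step identity for gNum
  have hstep : ∀ m : ℕ, 1 ≤ m →
      (gNum q m : ℤ) = (gNum q (m - 1) : ℤ) + (q : ℤ) ^ (m - 1) := by
    intro m hm
    obtain ⟨t, rfl⟩ := Nat.exists_eq_add_of_le hm
    rw [show 1 + t = t + 1 by omega]
    simp [gNum, Finset.sum_range_succ]
  -- the key linear identity for the last equivalence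
  have E : ((σ : ℤ) * (gNum q k : ℤ)
        - ∑ i ∈ Finset.Icc 1 (k - 1), ε i * (gNum q i : ℤ)) - (d : ℤ)
      = (σ : ℤ) * (gNum q (k - 1) : ℤ)
        - ∑ i ∈ Finset.Icc 1 (k - 1), ε i * (gNum q (i - 1) : ℤ) := by
    have hterm : ∀ i ∈ Finset.Icc 1 (k - 1),
        ε i * (gNum q i : ℤ)
          = ε i * (gNum q (i - 1) : ℤ) + ε i * (q : ℤ) ^ (i - 1) := by
      intro i hi
      rw [Finset.mem_Icc] at hi
      rw [hstep i hi.1]; ring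
    rw [hdef, hstep k hk, Finset.sum_congr rfl hterm, Finset.sum_add_distrib]
    ring
  refine ⟨main, fun n => ⟨by rw [main], ?_⟩⟩
  constructor <;> intro h <;> linarith
end
end

section
/- Let q be a prime power, let r > h ≥ 1 be integers, and let ε_1, …, ε_{r−1} ∈ ℤ be such that q^{h−i} divides ε_i for all 1 ≤ i ≤ h−1 and Σ_{i=1}^{r−1} ε_i·[i]_q ≡ 0 (mod [gcd(r,h)]_q). Set h' := r − h and, for 1 ≤ i ≤ r−1, ε'_i := ε_{r−i}·q^{h'−i} (a priori a rational number). Then every ε'_i is an integer, q^{h'−i} divides ε'_i for all 1 ≤ i ≤ h'−1, and Σ_{i=1}^{r−1} ε'_i·[i]_q ≡ 0 (mod [gcd(r,h')]_q). -/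
noncomputable section

lemma gNum_add (q a b : ℕ) : gNum q (a + b) = gNum q a + q ^ a * gNum q b := by
  unfold gNum
  rw [Finset.sum_range_add, Finset.mul_sum]
  congr 1
  exact Finset.sum_congr rfl fun x _ => (pow_add q a x)

lemma gNum_dvd (q d n : ℕ) (hdn : d ∣ n) : gNum q d ∣ gNum q n := by
  obtain ⟨k, rfl⟩ := hdn
  induction k with
  | zero => simp [gNum]
  | succ k ih =>
    rw [Nat.mul_succ, gNum_add]
    exact dvd_add ih (Dvd.dvd.mul_left (dvd_refl _) _)

theorem statement15 (q r h : ℕ) (hq : IsPrimePow q) (hh : 1 ≤ h) (hhr : h < r)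
    (ε : ℕ → ℤ)
    (hdiv : ∀ i ∈ Finset.Icc 1 (h - 1), ((q : ℤ) ^ (h - i)) ∣ ε i)
    (hmod : ((gNum q (Nat.gcd r h) : ℤ)) ∣
      ∑ i ∈ Finset.Icc 1 (r - 1), ε i * (gNum q i : ℤ)) :
    -- with `h' := r − h` and `ε'_i := ε_{r−i}·q^(h'−i)` (a priori rational), every `ε'_i`
    -- is an integer, `q^(h'−i) ∣ ε'_i` for `1 ≤ i ≤ h'−1`, and
    -- `Σ ε'_i·[i]_q ≡ 0 (mod [gcd(r,h')]_q)`.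
    ∃ ε' : ℕ → ℤ,
      (∀ i ∈ Finset.Icc 1 (r - 1),
        (ε' i : ℚ) = (ε (r - i) : ℚ) * (q : ℚ) ^ (((r : ℤ) - (h : ℤ)) - (i : ℤ))) ∧
      (∀ i ∈ Finset.Icc 1 (r - h - 1), ((q : ℤ) ^ (r - h - i)) ∣ ε' i) ∧
      (((gNum q (Nat.gcd r (r - h)) : ℤ)) ∣
        ∑ i ∈ Finset.Icc 1 (r - 1), ε' i * (gNum q i : ℤ)) := by
  have hq2 : 2 ≤ q := hq.two_le
  have hqZ : (q : ℤ) ≠ 0 := by positivity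
  set ε' : ℕ → ℤ := fun i => ε (r - i) * (q : ℤ) ^ (r - h - i) / (q : ℤ) ^ (i - (r - h))
    with hε'
  -- key pointwise identity
  have key : ∀ i ∈ Finset.Icc 1 (r - 1), (q : ℤ) ^ h * ε' i = ε (r - i) * (q : ℤ) ^ (r - i) := by
    intro i hi
    simp only [Finset.mem_Icc] at hi
    by_cases hile : i ≤ r - h
    · have h1 : i - (r - h) = 0 := by omega
      have h2 : h + (r - h - i) = r - i := by omega
      rw [hε']
      simp only [h1, pow_zero, Int.ediv_one]
      rw [← mul_assoc, mul_comm ((q:ℤ)^h), mul_assoc, ← pow_add, h2]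
    · have h1 : r - h - i = 0 := by omega
      have hj : r - i ∈ Finset.Icc 1 (h - 1) := by simp only [Finset.mem_Icc]; omega
      obtain ⟨c, hc⟩ := hdiv (r - i) hj
      have h2 : h - (r - i) = i - (r - h) := by omega
      have h3 : (r - i) + (h - (r - i)) = h := by omega
      rw [hε']
      simp only [h1, pow_zero, mul_one, hc, h2]
      rw [Int.mul_ediv_cancel_left _ (by positivity)]
      rw [show (q:ℤ) ^ (i - (r - h)) = (q:ℤ) ^ (h - (r - i)) by rw [h2]]
      rw [show (q:ℤ) ^ (h - (r - i)) * c * (q:ℤ) ^ (r - i)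
            = c * ((q:ℤ) ^ (h - (r - i)) * (q:ℤ) ^ (r - i)) from by ring,
        ← pow_add, show h - (r - i) + (r - i) = h from by omega]
      ring
  refine ⟨ε', ?_, ?_, ?_⟩
  · intro i hi
    have hk := key i hi
    simp only [Finset.mem_Icc] at hi
    have hqQ : (q : ℚ) ≠ 0 := by positivity
    have hcast : ((r : ℤ) - (h : ℤ)) - (i : ℤ) = ((r - i : ℕ) : ℤ) - (h : ℤ) := by
      push_cast [Nat.cast_sub (by omega : i ≤ r)]; ring
    rw [hcast, zpow_sub₀ hqQ, zpow_natCast, zpow_natCast]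
    have hkQ : (q : ℚ) ^ h * (ε' i : ℚ) = (ε (r - i) : ℚ) * (q : ℚ) ^ (r - i) := by
      exact_mod_cast congrArg (fun z : ℤ => (z : ℚ)) hk
    field_simp
    linarith [hkQ]
  · intro i hi
    simp only [Finset.mem_Icc] at hi
    have h1 : i - (r - h) = 0 := by omega
    rw [hε']
    simp only [h1, pow_zero, Int.ediv_one]
    exact Dvd.dvd.mul_left (dvd_refl _) _
  · -- the sum
    set d := Nat.gcd r h with hd
    have hg : Nat.gcd r (r - h) = d := by
      apply Nat.dvd_antisymm
      · refine Nat.dvd_gcd (Nat.gcd_dvd_left _ _) ?_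
        have h1 := Nat.dvd_sub (Nat.gcd_dvd_left r (r - h)) (Nat.gcd_dvd_right r (r - h))
        rwa [show r - (r - h) = h from by omega] at h1
      · exact Nat.dvd_gcd (Nat.gcd_dvd_left _ _)
          (Nat.dvd_sub (Nat.gcd_dvd_left r h) (Nat.gcd_dvd_right r h))
    rw [hg]
    have hd1 : 0 < d := Nat.gcd_pos_of_pos_right r hh
    -- q^h * S' = gNum q r * Σ ε j - Σ ε j * gNum q j
    have hsum : (q : ℤ) ^ h * (∑ i ∈ Finset.Icc 1 (r - 1), ε' i * (gNum q i : ℤ)) =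
        ∑ j ∈ Finset.Icc 1 (r - 1), ε j * ((gNum q r : ℤ) - (gNum q j : ℤ)) := by
      rw [Finset.mul_sum]
      refine Finset.sum_nbij' (fun i => r - i) (fun j => r - j) ?_ ?_ ?_ ?_ ?_
      · intro a ha; simp only [Finset.mem_Icc] at *; omega
      · intro a ha; simp only [Finset.mem_Icc] at *; omega
      · intro a ha; simp only [Finset.mem_Icc] at *; omega
      · intro a ha; simp only [Finset.mem_Icc] at *; omega
      · intro a ha
        have hk := key a ha
        simp only [Finset.mem_Icc] at ha
        have e : (gNum q r : ℤ) = (gNum q (r - a) : ℤ) + (q : ℤ) ^ (r - a) * (gNum q a : ℤ) := by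
          conv_lhs => rw [show r = (r - a) + a from by omega]
          rw [gNum_add]; push_cast; ring
        rw [e, ← mul_assoc, hk]
        ring
    have hdr : (gNum q d : ℤ) ∣ (gNum q r : ℤ) := by
      exact_mod_cast gNum_dvd q d r (Nat.gcd_dvd_left r h)
    have hdvd_qh : (gNum q d : ℤ) ∣
        (q : ℤ) ^ h * (∑ i ∈ Finset.Icc 1 (r - 1), ε' i * (gNum q i : ℤ)) := by
      rw [hsum]
      have : ∑ j ∈ Finset.Icc 1 (r - 1), ε j * ((gNum q r : ℤ) - (gNum q j : ℤ)) =
          (gNum q r : ℤ) * (∑ j ∈ Finset.Icc 1 (r - 1), ε j)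
          - ∑ j ∈ Finset.Icc 1 (r - 1), ε j * (gNum q j : ℤ) := by
        rw [Finset.mul_sum, ← Finset.sum_sub_distrib]
        exact Finset.sum_congr rfl fun x _ => by ring
      rw [this]
      exact dvd_sub (hdr.mul_right _) hmod
    -- coprimality of gNum q d and q^h
    have hcop : IsCoprime ((gNum q d : ℤ)) ((q : ℤ) ^ h) := by
      have hgd : (gNum q d : ℤ) = 1 + (q : ℤ) * (gNum q (d - 1) : ℤ) := by
        have : d = 1 + (d - 1) := by omega
        rw [this, gNum_add]
        push_cast [gNum]
        simp
      rw [hgd]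
      exact (isCoprime_one_left.add_mul_left_left _).pow_right
    exact hcop.dvd_of_dvd_mul_left hdvd_qh
end
end

section
/- Let q be a prime power and h ≥ 1, s ≥ 1 integers. Then n_q(2h,h;s) = (q^h + 1)·s: every multiset of n subspaces of F_q^{2h} of dimension at most h in which every hyperplane contains at most s elements (counted with multiplicity) satisfies n ≤ (q^h + 1)·s, and there exists a multiset of (q^h + 1)·s subspaces of dimension exactly h of F_q^{2h} such that every hyperplane contains exactly s of them. -/
open scoped Classical
open scoped Polynomial
open Module Polynomial

noncomputable section

set_option linter.unusedSectionVars false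

section Counting
variable {F V : Type*} [Field F] [Fintype F] [AddCommGroup V] [Module F V]
  [FiniteDimensional F V] [Finite V]

/-- functionals with equal kernels are proportional -/
lemma dual_prop (φ ψ : Module.Dual F V) (hψ : ψ ≠ 0) (hker : LinearMap.ker φ = LinearMap.ker ψ) :
    ∃ c : F, c ≠ 0 ∧ φ = c • ψ := by
  obtain ⟨v, hv⟩ : ∃ v, ψ v ≠ 0 := by
    by_contra h
    push_neg at h
    exact hψ (LinearMap.ext fun v => h v)
  refine ⟨φ v / ψ v, ?_, ?_⟩
  · have hφv : φ v ≠ 0 := by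
      intro h0
      have : v ∈ LinearMap.ker φ := h0
      rw [hker] at this
      exact hv this
    exact div_ne_zero hφv hv
  · ext w
    have hmem : w - (ψ w / ψ v) • v ∈ LinearMap.ker ψ := by
      rw [LinearMap.mem_ker, map_sub, map_smul, smul_eq_mul, div_mul_cancel₀ _ hv, sub_self]
    rw [← hker] at hmem
    have h0 : φ w - (ψ w / ψ v) * φ v = 0 := by
      simpa [map_sub, map_smul, sub_eq_zero, smul_eq_mul] using hmem
    have : φ w = (ψ w / ψ v) * φ v := by linear_combination h0
    rw [LinearMap.smul_apply, smul_eq_mul, this]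
    field_simp

end Counting

section C2
set_option linter.unusedSectionVars false
variable {F V : Type*} [Field F] [Fintype F] [AddCommGroup V] [Module F V]
  [FiniteDimensional F V] [Finite V]

lemma exists_ker_eq (H : Submodule F V) (hH : finrank F H + 1 = finrank F V) :
    ∃ φ : Module.Dual F V, LinearMap.ker φ = H := by
  have hq : finrank F (V ⧸ H) = 1 := by
    have := H.finrank_quotient_add_finrank
    omega
  have e : (V ⧸ H) ≃ₗ[F] F :=
    LinearEquiv.ofFinrankEq _ _ (by rw [hq, finrank_self])
  refine ⟨e.toLinearMap.comp H.mkQ, ?_⟩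
  rw [LinearMap.ker_comp, LinearEquiv.ker, Submodule.comap_bot, Submodule.ker_mkQ]

lemma ker_finrank (φ : Module.Dual F V) (hφ : φ ≠ 0) :
    finrank F (LinearMap.ker φ) + 1 = finrank F V := by
  have hr : LinearMap.range φ = ⊤ := by
    obtain ⟨v, hv⟩ : ∃ v, φ v ≠ 0 := by
      by_contra h; push_neg at h; exact hφ (LinearMap.ext fun v => h v)
    rw [eq_top_iff]
    rintro c -
    exact ⟨(c / φ v) • v, by simp [div_mul_cancel₀, hv]⟩
  have := φ.finrank_range_add_finrank_ker
  rw [hr, finrank_top, finrank_self] at this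
  omega

lemma hyperplane_count (W : Submodule F V) :
    (Fintype.card F - 1) *
      Nat.card {H : Submodule F V // finrank F H + 1 = finrank F V ∧ W ≤ H} =
    Fintype.card F ^ (finrank F V - finrank F W) - 1 := by
  haveI : Finite (Module.Dual F V) := Finite.of_injective _ DFunLike.coe_injective
  haveI : Finite (Submodule F V) :=
    Finite.of_injective (fun (p : Submodule F V) => (p : Set V)) SetLike.coe_injective
  set A := W.dualAnnihilator with hA
  set n := finrank F V with hn
  -- choice of a functional for each hyperplane
  have hch : ∀ H : {H : Submodule F V // finrank F H + 1 = n ∧ W ≤ H},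
      ∃ φ : Module.Dual F V, LinearMap.ker φ = (H : Submodule F V) :=
    fun H => exists_ker_eq _ H.2.1
  choose φh hφh using hch
  have hφh0 : ∀ H, φh H ≠ 0 := by
    intro H h0
    have : LinearMap.ker (φh H) = ⊤ := by rw [h0]; exact LinearMap.ker_zero
    rw [hφh H] at this
    have h2 := H.2.1
    rw [this] at h2
    rw [finrank_top] at h2
    omega
  have hφhA : ∀ H, φh H ∈ A := by
    intro H
    rw [hA, Submodule.mem_dualAnnihilator]
    intro w hw
    have : w ∈ LinearMap.ker (φh H) := by rw [hφh H]; exact H.2.2 hw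
    exact this
  -- the bijection
  let f : {H : Submodule F V // finrank F H + 1 = n ∧ W ≤ H} × Fˣ →
      {φ : Module.Dual F V // φ ∈ A ∧ φ ≠ 0} := fun p =>
    ⟨(p.2 : F) • φh p.1, A.smul_mem _ (hφhA p.1),
      fun h => hφh0 p.1 (by simpa [smul_eq_zero, Units.ne_zero] using h)⟩
  have hbij : Function.Bijective f := by
    constructor
    · rintro ⟨H, c⟩ ⟨H', c'⟩ hEq
      have hval : (c : F) • φh H = (c' : F) • φh H' := congrArg Subtype.val hEq
      have hkers : (H : Submodule F V) = (H' : Submodule F V) := by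
        rw [← hφh H, ← hφh H']
        rw [← LinearMap.ker_smul (φh H) (c : F) c.ne_zero,
            ← LinearMap.ker_smul (φh H') (c' : F) c'.ne_zero, hval]
      have hHH' : H = H' := Subtype.ext hkers
      subst hHH'
      obtain ⟨v, hv⟩ : ∃ v, φh H v ≠ 0 := by
        by_contra hcon; push_neg at hcon
        exact hφh0 H (LinearMap.ext fun v => hcon v)
      have hvv : (c : F) * φh H v = (c' : F) * φh H v := by
        have := congrArg (fun ψ : Module.Dual F V => ψ v) hval
        simpa using this
      exact Prod.ext rfl (Units.ext (mul_right_cancel₀ hv hvv))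
    · rintro ⟨φ, hφA, hφ0⟩
      set H : Submodule F V := LinearMap.ker φ with hH
      have h1 : finrank F H + 1 = n := ker_finrank φ hφ0
      have h2 : W ≤ H := by
        intro w hw
        exact (Submodule.mem_dualAnnihilator φ).mp hφA w hw
      obtain ⟨c, hc, hcφ⟩ := dual_prop φ (φh ⟨H, h1, h2⟩)
        (hφh0 _) (by rw [hφh ⟨H, h1, h2⟩])
      exact ⟨(⟨H, h1, h2⟩, Units.mk0 c hc), by
        apply Subtype.ext
        simpa [f] using hcφ.symm⟩
  -- count both sides
  have hcard1 : Nat.card {φ : Module.Dual F V // φ ∈ A ∧ φ ≠ 0} =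
      Nat.card {H : Submodule F V // finrank F H + 1 = n ∧ W ≤ H} * (Fintype.card F - 1) := by
    rw [← Nat.card_eq_of_bijective f hbij, Nat.card_prod, Nat.card_eq_fintype_card (α := Fˣ),
      Fintype.card_units]
  have hcard2 : Nat.card {φ : Module.Dual F V // φ ∈ A ∧ φ ≠ 0} =
      Fintype.card F ^ (n - finrank F W) - 1 := by
    have e1 : {φ : Module.Dual F V // φ ∈ A ∧ φ ≠ 0} ≃ {x : A // x ≠ 0} :=
      { toFun := fun p => ⟨⟨p.1, p.2.1⟩, fun h => p.2.2 (congrArg Subtype.val h)⟩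
        invFun := fun x => ⟨x.1.1, x.1.2, fun h => x.2 (Subtype.ext h)⟩
        left_inv := fun p => rfl
        right_inv := fun x => rfl }
    haveI : Fintype A := Fintype.ofFinite A
    have hAcard : Fintype.card A = Fintype.card F ^ (n - finrank F W) := by
      rw [card_eq_pow_finrank (K := F) (V := A)]
      congr 1
      have hq1 : finrank F (V ⧸ W) = finrank F A :=
        LinearEquiv.finrank_eq (Subspace.quotEquivAnnihilator W)
      have hq2 := W.finrank_quotient_add_finrank
      have hle : finrank F W ≤ n := Submodule.finrank_le W
      omega
    rw [Nat.card_congr e1]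
    haveI : Fintype {x : A // x ≠ 0} := Fintype.ofFinite _
    rw [Nat.card_eq_fintype_card]
    have := Fintype.card_subtype_compl (α := A) (p := fun x => x = 0)
    have h1 : Fintype.card {x : A // x = 0} = 1 := Fintype.card_subtype_eq (0 : A)
    have hconv : Fintype.card {x : A // x ≠ 0} = Fintype.card {x : A // ¬ x = 0} := by
      convert rfl
    rw [hconv]
    omega
  rw [mul_comm, ← hcard1, hcard2]

end C2

section C3
set_option linter.unusedSectionVars false
variable {F V : Type*} [Field F] [Fintype F] [AddCommGroup V] [Module F V]
  [FiniteDimensional F V] [Finite V]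

lemma cnt_sum (S : Multiset (Submodule F V)) (Hs : Finset (Submodule F V)) :
    ∑ H ∈ Hs, cnt S H =
      (S.map (fun W => (Hs.filter (fun H => W ≤ H)).card)).sum := by
  induction S using Multiset.induction_on with
  | empty => simp [cnt]
  | cons W S ih =>
    simp only [cnt, Multiset.countP_cons, Multiset.map_cons, Multiset.sum_cons] at *
    rw [Finset.sum_add_distrib, ih, Finset.card_filter]
    ring

lemma upper_bound (h s : ℕ) (hh : 1 ≤ h) (hV : finrank F V = 2 * h)
    (S : Multiset (Submodule F V)) (hdim : ∀ W ∈ S, finrank F W ≤ h)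
    (hHyp : ∀ H : Submodule F V, finrank F H = 2 * h - 1 → cnt S H ≤ s) :
    Multiset.card S ≤ (Fintype.card F ^ h + 1) * s := by
  classical
  haveI : Finite (Submodule F V) :=
    Finite.of_injective (fun (p : Submodule F V) => (p : Set V)) SetLike.coe_injective
  haveI : Fintype (Submodule F V) := Fintype.ofFinite _
  set q := Fintype.card F with hqdef
  have hq2 : 2 ≤ q := Fintype.one_lt_card
  set Hs : Finset (Submodule F V) :=
    Finset.univ.filter (fun H => finrank F H + 1 = finrank F V) with hHs
  -- each subspace `W ∈ S` is contained in many hyperplanes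
  have hWcount : ∀ W : Submodule F V, finrank F W ≤ h →
      q ^ h - 1 ≤ (q - 1) * (Hs.filter (fun H => W ≤ H)).card := by
    intro W hW
    have hfc : (Hs.filter (fun H => W ≤ H)).card =
        Nat.card {H : Submodule F V // finrank F H + 1 = finrank F V ∧ W ≤ H} := by
      rw [Nat.card_eq_fintype_card, Fintype.card_subtype, hHs, Finset.filter_filter]
    rw [hfc, hyperplane_count W, ← hqdef]
    have hle : h ≤ finrank F V - finrank F W := by omega
    have hpow : q ^ h ≤ q ^ (finrank F V - finrank F W) :=
      Nat.pow_le_pow_right (by omega) hle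
    omega
  -- total number of hyperplanes
  have hTotal : (q - 1) * Hs.card = q ^ (2 * h) - 1 := by
    have := hyperplane_count (F := F) (V := V) ⊥
    rw [finrank_bot, Nat.sub_zero, hV, ← hqdef] at this
    rw [← this]
    congr 1
    rw [Nat.card_eq_fintype_card, Fintype.card_subtype, hHs]
    congr 1
    apply Finset.filter_congr
    intro H _
    simp [hV]
  -- double counting
  have hsum := cnt_sum S Hs
  have hup : ∑ H ∈ Hs, cnt S H ≤ Hs.card * s := by
    calc ∑ H ∈ Hs, cnt S H ≤ ∑ H ∈ Hs, s := by
          apply Finset.sum_le_sum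
          intro H hH
          apply hHyp
          have : finrank F H + 1 = finrank F V := by
            simp only [hHs, Finset.mem_filter] at hH
            exact hH.2
          omega
      _ = Hs.card * s := by rw [Finset.sum_const, smul_eq_mul]
  have hlow : Multiset.card S * (q ^ h - 1) ≤
      (q - 1) * ∑ H ∈ Hs, cnt S H := by
    rw [hsum]
    rw [← Multiset.sum_map_mul_left]
    calc Multiset.card S * (q ^ h - 1)
        = Multiset.card (S.map (fun W => (q-1) * (Hs.filter (fun H => W ≤ H)).card)) * (q ^ h - 1) := by
          rw [Multiset.card_map]
      _ ≤ (S.map (fun W => (q-1) * (Hs.filter (fun H => W ≤ H)).card)).sum := by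
          rw [← smul_eq_mul]
          apply Multiset.card_nsmul_le_sum
          intro x hx
          obtain ⟨W, hW, rfl⟩ := Multiset.mem_map.mp hx
          exact hWcount W (hdim W hW)
      _ = (Multiset.map (fun W => (q-1) * (fun W => (Hs.filter (fun H => W ≤ H)).card) W) S).sum := rfl
  -- put it together
  have hfact : q ^ (2 * h) - 1 = (q ^ h - 1) * (q ^ h + 1) := by
    have h1 : 1 ≤ q ^ h := Nat.one_le_pow _ _ (by omega)
    obtain ⟨b, hb⟩ := Nat.exists_eq_add_of_le h1
    have h2 : q ^ (2 * h) = q ^ h * q ^ h := by rw [two_mul, pow_add]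
    rw [h2, hb]
    have e1 : (1 + b) * (1 + b) = b * b + 2 * b + 1 := by ring
    have e2 : (1 + b - 1) * (1 + b + 1) = b * b + 2 * b := by
      rw [Nat.add_sub_cancel_left]; ring
    omega
  have hchain : Multiset.card S * (q ^ h - 1) ≤ ((q ^ h + 1) * s) * (q ^ h - 1) := by
    calc Multiset.card S * (q ^ h - 1) ≤ (q - 1) * ∑ H ∈ Hs, cnt S H := hlow
      _ ≤ (q - 1) * (Hs.card * s) := Nat.mul_le_mul_left _ hup
      _ = ((q - 1) * Hs.card) * s := by ring
      _ = (q ^ (2*h) - 1) * s := by rw [hTotal]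
      _ = ((q ^ h + 1) * s) * (q ^ h - 1) := by rw [hfact]; ring
  have hpos : 0 < q ^ h - 1 := by
    have : 2 ≤ q ^ h := by
      calc 2 = 2 ^ 1 := rfl
        _ ≤ q ^ h := Nat.pow_le_pow_left (by omega) h |>.trans' (Nat.pow_le_pow_right (by omega) hh)
    omega
  exact Nat.le_of_mul_le_mul_right hchain hpos

end C3

section Spread
set_option linter.unusedSectionVars false
variable {F K : Type*} [Field F] [Fintype F] [Field K] [Fintype K] [Algebra F K]

variable (K) in
def vec (o : Option K) : K × K := match o with
  | none => (0, 1)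
  | some c => (1, c)

lemma vec_ne_zero (o : Option K) : vec K o ≠ 0 := by
  cases o with
  | none => simp [vec, Prod.ext_iff]
  | some c => simp [vec, Prod.ext_iff]

variable (K) in
def lineK (o : Option K) : Submodule K (K × K) := Submodule.span K {vec K o}

variable (K) in
def lineF (o : Option K) : Submodule F (K × K) := (lineK K o).restrictScalars F

lemma finrank_lineF (o : Option K) : finrank F (lineF (F := F) K o) = finrank F K := by
  have e : K ≃ₗ[K] ↥(lineK K o) :=
    LinearEquiv.toSpanNonzeroSingleton K (K × K) (vec K o) (vec_ne_zero o)
  have e2 : K ≃ₗ[F] ↥(lineK K o) := e.restrictScalars F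
  have e3 : ↥(lineF (F := F) K o) ≃ₗ[F] ↥(lineK K o) :=
    (Submodule.restrictScalarsEquiv F K (K × K) (lineK K o)).restrictScalars F
  rw [e3.finrank_eq, ← e2.finrank_eq]

/-- every nonzero vector lies on one of the indexed lines -/
lemma exists_vec (v : K × K) (hv : v ≠ 0) :
    ∃ (o : Option K) (c : K), c ≠ 0 ∧ v = c • vec K o := by
  obtain ⟨x, y⟩ := v
  by_cases hx : x = 0
  · subst hx
    have hy : y ≠ 0 := fun h => hv (by simp [h, Prod.ext_iff])
    exact ⟨none, y, hy, by simp [vec, Prod.ext_iff]⟩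
  · refine ⟨some (y / x), x, hx, ?_⟩
    simp only [vec, Prod.smul_mk, smul_eq_mul, mul_one, Prod.mk.injEq]
    constructor
    · trivial
    · field_simp
/-- two distinct lines span everything -/
lemma vec_spans {o o' : Option K} (hne : o ≠ o') (w : K × K) :
    ∃ a b : K, w = a • vec K o + b • vec K o' := by
  obtain ⟨x, y⟩ := w
  match o, o' with
  | none, none => exact absurd rfl hne
  | some c, some c' =>
    have hcc : c ≠ c' := fun h => hne (by rw [h])
    refine ⟨x - (y - c * x) / (c' - c), (y - c * x) / (c' - c), ?_⟩
    simp only [vec, Prod.smul_mk, smul_eq_mul, mul_one, Prod.mk_add_mk, Prod.mk.injEq]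
    have hsub : c' - c ≠ 0 := sub_ne_zero.mpr (Ne.symm hcc)
    constructor
    · ring
    · field_simp
      ring
  | some c, none =>
    refine ⟨x, y - x * c, ?_⟩
    simp only [vec, Prod.smul_mk, smul_eq_mul, mul_one, mul_zero, mul_one, Prod.mk_add_mk,
      Prod.mk.injEq]
    constructor
    · ring
    · ring
  | none, some c =>
    refine ⟨y - x * c, x, ?_⟩
    simp only [vec, Prod.smul_mk, smul_eq_mul, mul_one, mul_zero, Prod.mk_add_mk, Prod.mk.injEq]
    constructor
    · ring
    · ring

end Spread

section Inf
set_option linter.unusedSectionVars false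
variable {F V : Type*} [Field F] [AddCommGroup V] [Module F V] [FiniteDimensional F V]

lemma finrank_finset_inf_ge {ι : Type*} (t : Finset ι) (p : ι → Submodule F V)
    (hp : ∀ i, finrank F V ≤ finrank F (p i) + 1) :
    finrank F V ≤ finrank F ↥(t.inf p) + t.card := by
  induction t using Finset.cons_induction with
  | empty => exact (finrank_top F V).ge
  | cons a t ha ih =>
    rw [Finset.inf_cons, Finset.card_cons]
    have heq := Submodule.finrank_sup_add_finrank_inf_eq (p a) (t.inf p)
    have hle : finrank F ((p a) ⊔ (t.inf p) : Submodule F V) ≤ finrank F V :=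
      Submodule.finrank_le _
    have := hp a
    omega

lemma finrank_iInf_ge {ι : Type*} [Fintype ι] (p : ι → Submodule F V)
    (hp : ∀ i, finrank F V ≤ finrank F (p i) + 1) :
    finrank F V ≤ finrank F ↥(⨅ i, p i) + Fintype.card ι := by
  have huniv : (Finset.univ : Finset ι).inf p = ⨅ i, p i := by
    apply le_antisymm
    · exact le_iInf fun i => Finset.inf_le (Finset.mem_univ i)
    · exact Finset.le_inf fun i _ => iInf_le p i
  have := finrank_finset_inf_ge Finset.univ p hp
  rw [huniv, Finset.card_univ] at this
  exact this

end Inf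

section Hyper
set_option linter.unusedSectionVars false
variable {F K : Type*} [Field F] [Fintype F] [Field K] [Fintype K] [Algebra F K]

/-- scalar multiplication by a nonzero element of `K`, as an `F`-linear equiv of `K × K` -/
def eSmul (c : K) (hc : c ≠ 0) : (K × K) ≃ₗ[F] (K × K) where
  toFun v := c • v
  invFun v := c⁻¹ • v
  map_add' := smul_add c
  map_smul' a v := by simp only [RingHom.id_apply]; exact smul_comm c a v
  left_inv v := by
    show c⁻¹ • c • v = v
    rw [smul_smul, inv_mul_cancel₀ hc, one_smul]
  right_inv v := by
    show c • c⁻¹ • v = v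
    rw [smul_smul, mul_inv_cancel₀ hc, one_smul]

lemma hyperplane_line (h : ℕ) (hh : 1 ≤ h) (hrank : finrank F K = h)
    (H : Submodule F (K × K)) (hH : finrank F H + 1 = 2 * h) :
    ∃! o : Option K, lineF (F := F) K o ≤ H := by
  haveI : FiniteDimensional F K := Module.Finite.of_finite (R := F) (M := K)
  have hVrank : finrank F (K × K) = 2 * h := by
    rw [Module.finrank_prod, hrank]; ring
  -- the subspace of vectors all whose K-multiples lie in H
  set bK : Basis (Fin h) F K := (Module.finBasis F K).reindex (finCongr hrank) with hbK
  set N : Submodule F (K × K) :=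
    ⨅ i : Fin h, Submodule.comap (eSmul (F := F) (bK i) (bK.ne_zero i)).toLinearMap H with hN
  have hNrank : 1 ≤ finrank F N := by
    have := finrank_iInf_ge (F := F) (V := K × K)
      (fun i : Fin h => Submodule.comap (eSmul (F := F) (bK i) (bK.ne_zero i)).toLinearMap H)
      (fun i => by
        rw [Submodule.comap_equiv_eq_map_symm, LinearEquiv.finrank_map_eq]
        omega)
    rw [Fintype.card_fin, hVrank] at this
    rw [← hN] at this
    omega
  have hNne : N ≠ ⊥ := by
    intro hbot
    rw [hbot, finrank_bot] at hNrank
    omega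
  obtain ⟨v, hvN, hv0⟩ := Submodule.ne_bot_iff N |>.mp hNne
  have hsmul : ∀ c : K, c • v ∈ H := by
    intro c
    have hbase : ∀ i : Fin h, (bK i) • v ∈ H := by
      intro i
      have := (Submodule.mem_iInf _).mp hvN i
      simpa [Submodule.mem_comap, eSmul] using this
    have hrepr : (∑ i, bK.repr c i • bK i) = c := bK.sum_repr c
    have hceq : c • v = ∑ i, (bK.repr c i • bK i) • v := by
      rw [← Finset.sum_smul, hrepr]
    rw [hceq]
    apply Submodule.sum_mem
    intro i _
    rw [smul_assoc]
    exact H.smul_mem _ (hbase i)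
  obtain ⟨o, c₀, hc₀, hvec⟩ := exists_vec v hv0
  have hle : lineF (F := F) K o ≤ H := by
    intro w hw
    rw [lineF, Submodule.restrictScalars_mem, lineK, Submodule.mem_span_singleton] at hw
    obtain ⟨a, rfl⟩ := hw
    have : vec K o = c₀⁻¹ • v := by rw [hvec, smul_smul, inv_mul_cancel₀ hc₀, one_smul]
    rw [this, smul_smul]
    exact hsmul _
  refine ⟨o, hle, ?_⟩
  intro o' ho'
  by_contra hne
  have hTop : H = ⊤ := by
    rw [Submodule.eq_top_iff']
    intro w
    obtain ⟨a, b, hab⟩ := vec_spans (K := K) hne w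
    rw [hab]
    apply H.add_mem
    · exact ho' (by
        rw [lineF, Submodule.restrictScalars_mem, lineK, Submodule.mem_span_singleton]
        exact ⟨a, rfl⟩)
    · exact hle (by
        rw [lineF, Submodule.restrictScalars_mem, lineK, Submodule.mem_span_singleton]
        exact ⟨b, rfl⟩)
  rw [hTop, finrank_top, hVrank] at hH
  omega

end Hyper

/-- over a finite field there is an extension of any prescribed degree -/
lemma exists_extension (F : Type*) [Field F] [Fintype F] (h : ℕ) (hh : 1 ≤ h) :
    ∃ (K : Type) (_ : Field K) (_ : Fintype K) (_ : Algebra F K),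
      finrank F K = h := by
  set p := ringChar F with hp
  haveI hcp : CharP F p := ringChar.charP F
  haveI hfp : Fact p.Prime := ⟨CharP.char_is_prime F p⟩
  obtain ⟨m, -, hm⟩ := FiniteField.card F p
  letI : Algebra (ZMod p) F := ZMod.algebra F p
  set K := GaloisField p (m * h) with hK
  haveI : Finite K := inferInstance
  haveI : Fintype K := Fintype.ofFinite K
  have hcardK : Fintype.card K = p ^ (m * h : ℕ) := by
    rw [← Nat.card_eq_fintype_card, hK, GaloisField.card]
    positivity
  -- `X ^ q - X` splits in `K`
  have hq1 : 1 ≤ Fintype.card F := Fintype.card_pos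
  have hdvd : (X ^ Fintype.card F - X : (ZMod p)[X]) ∣ X ^ Fintype.card K - X := by
    have h1 : Fintype.card F - 1 ∣ Fintype.card K - 1 := by
      have : Fintype.card K = Fintype.card F ^ h := by
        rw [hcardK, hm, ← pow_mul]
      rw [this]
      have := Nat.sub_dvd_pow_sub_pow (Fintype.card F) 1 h
      simpa using this
    obtain ⟨c, hc⟩ := h1
    have e1 : (X ^ Fintype.card F - X : (ZMod p)[X]) = X * (X ^ (Fintype.card F - 1) - 1) := by
      rw [mul_sub, mul_one, ← pow_succ']
      congr 2
      omega
    have e2 : (X ^ Fintype.card K - X : (ZMod p)[X]) = X * (X ^ (Fintype.card K - 1) - 1) := by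
      have hK1 : 1 ≤ Fintype.card K := Fintype.card_pos
      rw [mul_sub, mul_one, ← pow_succ']
      congr 2
      omega
    rw [e1, e2, hc]
    apply mul_dvd_mul_left
    have := sub_dvd_pow_sub_pow (X ^ (Fintype.card F - 1) : (ZMod p)[X]) 1 c
    rw [← pow_mul, one_pow] at this
    exact this
  have hsplits : Splits (Polynomial.map (algebraMap (ZMod p) K) (X ^ Fintype.card F - X)) := by
    have hKsplits : Splits (Polynomial.map (algebraMap (ZMod p) K) (X ^ Fintype.card K - X)) :=
      FiniteField.splits_X_pow_card_sub_X p
    exact hKsplits.of_dvd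
      (Polynomial.map_ne_zero (FiniteField.X_pow_card_sub_X_ne_zero _ Fintype.one_lt_card))
      (Polynomial.map_dvd _ hdvd)
  haveI : IsSplittingField (ZMod p) F (X ^ Fintype.card F - X) :=
    FiniteField.isSplittingField_sub F (ZMod p)
  let ψ : F →ₐ[ZMod p] K := IsSplittingField.lift F (X ^ Fintype.card F - X) hsplits
  letI : Algebra F K := (ψ.toRingHom).toAlgebra
  refine ⟨K, inferInstance, inferInstance, inferInstance, ?_⟩
  have hcard2 : Fintype.card K = Fintype.card F ^ finrank F K :=
    card_eq_pow_finrank (K := F) (V := K)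
  have : Fintype.card F ^ h = Fintype.card F ^ finrank F K := by
    rw [← hcard2, hcardK, hm, ← pow_mul]
  exact (Nat.pow_right_injective Fintype.one_lt_card this.symm)


theorem statement17 (F : Type*) [Field F] [Fintype F] (q h s : ℕ)
    (hq : q = Fintype.card F) (hh : 1 ≤ h) (hs : 1 ≤ s) :
    -- upper bound: `n_q(2h,h;s) ≤ (q^h + 1)·s`
    (∀ S : Multiset (Submodule F (Fin (2 * h) → F)),
      (∀ W ∈ S, Module.finrank F W ≤ h) →
      (∀ H : Submodule F (Fin (2 * h) → F),
        Module.finrank F H = 2 * h - 1 → cnt S H ≤ s) →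
      Multiset.card S ≤ (q ^ h + 1) * s) ∧
    -- and the bound is attained:
    (∃ S : Multiset (Submodule F (Fin (2 * h) → F)),
      Multiset.card S = (q ^ h + 1) * s ∧
      (∀ W ∈ S, Module.finrank F W = h) ∧
      ∀ H : Submodule F (Fin (2 * h) → F),
        Module.finrank F H = 2 * h - 1 → cnt S H = s) := by
  have hVrank : finrank F (Fin (2 * h) → F) = 2 * h := Module.finrank_fin_fun F
  constructor
  · intro S hdim hHyp
    rw [hq]
    exact upper_bound h s hh hVrank S hdim hHyp
  · -- construction
    obtain ⟨K, _, _, _, hrank⟩ := exists_extension F h hh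
    haveI : FiniteDimensional F K := Module.Finite.of_finite (R := F) (M := K)
    have hKKrank : finrank F (K × K) = 2 * h := by
      rw [Module.finrank_prod, hrank]; ring
    obtain ⟨e⟩ : Nonempty ((K × K) ≃ₗ[F] (Fin (2 * h) → F)) :=
      ⟨LinearEquiv.ofFinrankEq _ _ (by rw [hKKrank, hVrank])⟩
    set L : Option K → Submodule F (Fin (2 * h) → F) :=
      fun o => (lineF (F := F) K o).map e.toLinearMap with hL
    have hLrank : ∀ o, finrank F (L o) = h := by
      intro o
      rw [hL]
      rw [LinearEquiv.finrank_map_eq e (lineF (F := F) K o), finrank_lineF, hrank]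
    have hcardK : Fintype.card K = q ^ h := by
      rw [card_eq_pow_finrank (K := F) (V := K), hrank, hq]
    refine ⟨s • Multiset.map L (Finset.univ : Finset (Option K)).val, ?_, ?_, ?_⟩
    · rw [Multiset.card_nsmul, Multiset.card_map]
      have : Multiset.card (Finset.univ : Finset (Option K)).val = Fintype.card (Option K) :=
        rfl
      rw [this, Fintype.card_option, hcardK, mul_comm]
    · intro W hW
      rw [Multiset.mem_nsmul] at hW
      obtain ⟨-, hW⟩ := hW
      obtain ⟨o, -, rfl⟩ := Multiset.mem_map.mp hW
      exact hLrank o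
    · intro H hH
      have hH' : finrank F (Submodule.comap e.toLinearMap H) + 1 = 2 * h := by
        rw [Submodule.comap_equiv_eq_map_symm, LinearEquiv.finrank_map_eq]
        omega
      obtain ⟨o₀, ho₀, huniq⟩ :=
        hyperplane_line (F := F) (K := K) h hh hrank (Submodule.comap e.toLinearMap H) hH'
      have hiff : ∀ o : Option K, L o ≤ H ↔ lineF (F := F) K o ≤ Submodule.comap e.toLinearMap H :=
        fun o => Submodule.map_le_iff_le_comap
      rw [cnt, Multiset.countP_nsmul, Multiset.countP_map]
      have hfilter : Multiset.filter (fun o => L o ≤ H) (Finset.univ : Finset (Option K)).val =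
          (Finset.filter (fun o => L o ≤ H) Finset.univ).val := by
        rw [Finset.filter_val]
      rw [hfilter]
      have hsingle : Finset.filter (fun o => L o ≤ H) Finset.univ = {o₀} := by
        ext o
        simp only [Finset.mem_filter, Finset.mem_univ, true_and, Finset.mem_singleton]
        constructor
        · intro hle
          exact huniq o ((hiff o).mp hle)
        · rintro rfl
          exact (hiff _).mpr ho₀
      have : Multiset.card (Finset.filter (fun o => L o ≤ H) Finset.univ).val =
          (Finset.filter (fun o => L o ≤ H) Finset.univ).card := rfl
      rw [this, hsingle, Finset.card_singleton, mul_one]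
end
end
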